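/- arXiv:1810.12497 — 2 statements merged into one kernel-verified Lean document; each statement's English description precedes it below -/
import Mathlib

section
/- Let (I,|·|_I) be a normed ideal in which the finite-rank operators R(H) are dense. If τ = (T_j)_{1≤j≤n} and τ' = (T'_j)_{1≤j≤n} are n-tuples of bounded operators on H with T_j − T'_j ∈ I for 1 ≤ j ≤ n, then k_I(τ) = k_I(τ'). -/
open scoped ENNReal InnerProductSpace Classical
open Filter

noncomputable section

variable {E : Type*} [NormedAddCommGroup E] [InnerProductSpace ℂ E] [CompleteSpace E]

/-- A bounded operator has finite rank. -/
def IsFiniteRank (T : E →L[ℂ] E) : Prop :=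
  FiniteDimensional ℂ (LinearMap.range (T : E →ₗ[ℂ] E))

/-- A quasicentral approximating sequence: finite rank, `0 ≤ Aₘ ≤ 1`, increasing,
converging strongly to the identity (`Aₘ ↑ I`). -/
def IsQCSeq (A : ℕ → E →L[ℂ] E) : Prop :=
  (∀ m, IsFiniteRank (A m)) ∧ (∀ m, (A m).IsPositive) ∧
    (∀ m, ((1 : E →L[ℂ] E) - A m).IsPositive) ∧
    (∀ m, (A (m + 1) - A m).IsPositive) ∧
    (∀ x : E, Tendsto (fun m => A m x) atTop (nhds x))

/-- The modulus of quasicentral approximation `k_I(τ)` of an `n`-tuple `T` relative to an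
`ℝ≥0∞`-valued ideal norm `N`: the least `C ∈ [0,∞]` such that there is a quasicentral
approximating sequence with `lim_m max_j N([Aₘ, Tⱼ]) = C`. -/
def kQ {n : ℕ} (N : (E →L[ℂ] E) → ℝ≥0∞) (T : Fin n → E →L[ℂ] E) : ℝ≥0∞ :=
  sInf {C | ∃ A : ℕ → E →L[ℂ] E, IsQCSeq A ∧
    Tendsto (fun m => Finset.univ.sup fun j => N (A m * T j - T j * A m)) atTop (nhds C)}

/-- The `j`-th singular value (approximation number) of a bounded operator: the distance
to the operators of rank at most `j` (0-indexed: `sVal T 0 = ‖T‖`). -/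
def sVal (T : E →L[ℂ] E) (j : ℕ) : ℝ :=
  sInf {r | ∃ F : E →L[ℂ] E, IsFiniteRank F ∧
    Module.finrank ℂ (LinearMap.range (F : E →ₗ[ℂ] E)) ≤ j ∧ r = ‖T - F‖}

/-- The Lorentz `(p,1)` ideal norm `|X|⁻_p = Σ_{j≥1} s_j j^{1/p - 1}`, for `p ∈ [1,∞]`
(`p = ∞` gives the Macaev ideal norm `Σ_{j≥1} s_j / j`). -/
def lorentzNorm (p : ℝ≥0∞) (T : E →L[ℂ] E) : ℝ≥0∞ :=
  ∑' j : ℕ, ENNReal.ofReal (sVal T j * ((j : ℝ) + 1) ^ ((1 / p).toReal - 1))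

/-- The Schatten–von Neumann `p`-norm `|X|_p = (Σ_j s_j^p)^{1/p}` for `1 ≤ p < ∞`, with
`C_∞ = K(H)` (compacts with the operator norm) for `p = ∞`. -/
def sNormE (p : ℝ≥0∞) (T : E →L[ℂ] E) : ℝ≥0∞ :=
  if p = ∞ then (if IsCompactOperator T then ENNReal.ofReal ‖T‖ else ∞)
  else (∑' j : ℕ, ENNReal.ofReal (sVal T j ^ p.toReal)) ^ (1 / p.toReal)

/-- A symmetrically normed ideal of compact operators, encoded by its (extended-real-valued)
norm function `N`; the ideal itself is `{X | N X ≠ ∞}`, which contains the finite rank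
operators and consists of compact operators. -/
structure NormedIdeal (E : Type*) [NormedAddCommGroup E] [InnerProductSpace ℂ E]
    [CompleteSpace E] where
  N : (E →L[ℂ] E) → ℝ≥0∞
  finiteRank_mem : ∀ T, IsFiniteRank T → N T ≠ ∞
  compact_of_mem : ∀ T, N T ≠ ∞ → IsCompactOperator T
  eq_zero_of : ∀ T, N T = 0 → T = 0
  add_le : ∀ S T, N (S + T) ≤ N S + N T
  smul_eq : ∀ (c : ℂ) (T), N (c • T) = ENNReal.ofReal ‖c‖ * N T
  mul_le : ∀ A X B : E →L[ℂ] E, N (A * X * B) ≤ ENNReal.ofReal ‖A‖ * N X * ENNReal.ofReal ‖B‖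
  opNorm_le : ∀ T, ENNReal.ofReal ‖T‖ ≤ N T
  adjoint_eq : ∀ T, N (ContinuousLinearMap.adjoint T) = N T

/-- The finite rank operators are dense in the normed ideal `I`. -/
def NormedIdeal.RDense (I : NormedIdeal E) : Prop :=
  ∀ T, I.N T ≠ ∞ → ∀ ε : ℝ, 0 < ε → ∃ F, IsFiniteRank F ∧ I.N (T - F) < ENNReal.ofReal ε


-- ==================== AUX ====================
section Aux

set_option linter.unusedSectionVars false
variable {H : Type} [NormedAddCommGroup H] [InnerProductSpace ℂ H] [CompleteSpace H]

/-- rank one operator `x ↦ ⟪ξ, x⟫ • η`. -/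
def rk (ξ η : H) : H →L[ℂ] H := (innerSL ℂ ξ).smulRight η

@[simp] lemma rk_apply (ξ η x : H) : rk ξ η x = ⟪ξ, x⟫_ℂ • η := rfl

lemma norm_rk_le (ξ η : H) : ‖rk ξ η‖ ≤ ‖ξ‖ * ‖η‖ := by
  refine ContinuousLinearMap.opNorm_le_bound _ (by positivity) fun x => ?_
  rw [rk_apply, norm_smul]
  calc ‖⟪ξ, x⟫_ℂ‖ * ‖η‖ ≤ (‖ξ‖ * ‖x‖) * ‖η‖ := by
        have := norm_inner_le_norm (𝕜 := ℂ) ξ x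
        gcongr
    _ = ‖ξ‖ * ‖η‖ * ‖x‖ := by ring

lemma mul_rk (T : H →L[ℂ] H) (ξ η : H) : T * rk ξ η = rk ξ (T η) := by
  ext x; simp

lemma rk_finiteRank (ξ η : H) : IsFiniteRank (rk ξ η) := by
  unfold IsFiniteRank
  have hle : LinearMap.range ((rk ξ η : H →L[ℂ] H) : H →ₗ[ℂ] H) ≤ Submodule.span ℂ {η} := by
    rintro y ⟨x, rfl⟩
    exact Submodule.mem_span_singleton.2 ⟨⟪ξ, x⟫_ℂ, rfl⟩
  exact Submodule.finiteDimensional_of_le hle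

lemma adjoint_rk (ξ η : H) : ContinuousLinearMap.adjoint (rk ξ η) = rk η ξ := by
  symm
  rw [ContinuousLinearMap.eq_adjoint_iff]
  intro x y
  simp only [rk_apply, inner_smul_left, inner_smul_right, inner_conj_symm]
  ring

lemma N_zero (I : NormedIdeal H) : I.N 0 = 0 := by
  have h := I.smul_eq 0 0
  simpa using h

lemma N_neg (I : NormedIdeal H) (T : H →L[ℂ] H) : I.N (-T) = I.N T := by
  have h := I.smul_eq (-1) T
  simpa using h

lemma N_sub_le (I : NormedIdeal H) (S T : H →L[ℂ] H) : I.N (S - T) ≤ I.N S + I.N T := by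
  have h := I.add_le S (-T)
  rw [N_neg] at h
  simpa [sub_eq_add_neg] using h

lemma N_sum_le (I : NormedIdeal H) {ι : Type*} (s : Finset ι) (f : ι → H →L[ℂ] H) :
    I.N (∑ i ∈ s, f i) ≤ ∑ i ∈ s, I.N (f i) := by
  classical
  induction s using Finset.induction_on with
  | empty => simp [N_zero]
  | @insert a s ha ih =>
    rw [Finset.sum_insert ha, Finset.sum_insert ha]
    exact (I.add_le _ _).trans (add_le_add le_rfl ih)

lemma N_mul_le_left (I : NormedIdeal H) (B X : H →L[ℂ] H) :
    I.N (B * X) ≤ ENNReal.ofReal ‖B‖ * I.N X := by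
  have h := I.mul_le B X 1
  rw [mul_one] at h
  refine h.trans ?_
  have h1 : ENNReal.ofReal ‖(1 : H →L[ℂ] H)‖ ≤ 1 := by
    rw [ENNReal.ofReal_le_one]
    exact ContinuousLinearMap.norm_id_le
  calc ENNReal.ofReal ‖B‖ * I.N X * ENNReal.ofReal ‖(1 : H →L[ℂ] H)‖
      ≤ ENNReal.ofReal ‖B‖ * I.N X * 1 := by gcongr
    _ = ENNReal.ofReal ‖B‖ * I.N X := mul_one _

lemma N_mul_le_right (I : NormedIdeal H) (X B : H →L[ℂ] H) :
    I.N (X * B) ≤ I.N X * ENNReal.ofReal ‖B‖ := by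
  have h := I.mul_le 1 X B
  rw [one_mul] at h
  refine h.trans ?_
  have h1 : ENNReal.ofReal ‖(1 : H →L[ℂ] H)‖ ≤ 1 := by
    rw [ENNReal.ofReal_le_one]
    exact ContinuousLinearMap.norm_id_le
  calc ENNReal.ofReal ‖(1 : H →L[ℂ] H)‖ * I.N X * ENNReal.ofReal ‖B‖
      ≤ 1 * I.N X * ENNReal.ofReal ‖B‖ := by gcongr
    _ = I.N X * ENNReal.ofReal ‖B‖ := by rw [one_mul]

lemma N_rk_le (I : NormedIdeal H) {e₀ : H} (he : ‖e₀‖ = 1) (ξ η : H) :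
    I.N (rk ξ η) ≤ ENNReal.ofReal ‖η‖ * I.N (rk e₀ e₀) * ENNReal.ofReal ‖ξ‖ := by
  have hee : ⟪e₀, e₀⟫_ℂ = 1 := by
    rw [inner_self_eq_norm_sq_to_K, he]; norm_num
  have hfac : rk ξ η = rk e₀ η * rk e₀ e₀ * rk ξ e₀ := by
    ext x
    simp [ContinuousLinearMap.mul_apply, inner_smul_right, hee, he]
  rw [hfac]
  refine (I.mul_le _ _ _).trans ?_
  gcongr
  · exact (norm_rk_le _ _).trans (by rw [he, one_mul])
  · exact (norm_rk_le _ _).trans (by rw [he, mul_one])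

lemma exists_rk_decomp (F : H →L[ℂ] H) (hF : IsFiniteRank F) :
    ∃ (k : ℕ) (ξ η : Fin k → H), F = ∑ i, rk (ξ i) (η i) := by
  haveI : FiniteDimensional ℂ (LinearMap.range (F : H →ₗ[ℂ] H)) := hF
  set V := LinearMap.range (F : H →ₗ[ℂ] H) with hV
  let b := stdOrthonormalBasis ℂ V
  refine ⟨Module.finrank ℂ V, fun i => ContinuousLinearMap.adjoint F ((b i : V) : H),
    fun i => ((b i : V) : H), ?_⟩
  ext x
  have hx : F x ∈ V := LinearMap.mem_range_self _ x
  have h1 := congrArg (Subtype.val) (b.sum_repr ⟨F x, hx⟩)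
  simp only [OrthonormalBasis.repr_apply_apply, Submodule.coe_inner] at h1
  rw [ContinuousLinearMap.sum_apply]
  simp only [rk_apply, ContinuousLinearMap.adjoint_inner_left]
  calc F x = ((∑ i, ⟪((b i : V) : H), F x⟫_ℂ • b i : V) : H) := h1.symm
    _ = ∑ i, ⟪((b i : V) : H), F x⟫_ℂ • ((b i : V) : H) := by push_cast; rfl

end Aux

section Aux2
set_option linter.unusedSectionVars false
variable {H : Type} [NormedAddCommGroup H] [InnerProductSpace ℂ H] [CompleteSpace H]

lemma norm_le_one_of_pos {A : H →L[ℂ] H} (hA : A.IsPositive)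
    (h1 : ((1 : H →L[ℂ] H) - A).IsPositive) : ‖A‖ ≤ 1 := by
  by_cases h0 : ‖A‖ = 0
  · rw [h0]; norm_num
  have hApos : 0 < ‖A‖ := lt_of_le_of_ne (norm_nonneg _) (Ne.symm h0)
  have hsym : (A : H →ₗ[ℂ] H).IsSymmetric :=
    ContinuousLinearMap.isSelfAdjoint_iff_isSymmetric.1 hA.isSelfAdjoint
  have hsym' : ∀ a b : H, ⟪A a, b⟫_ℂ = ⟪a, A b⟫_ℂ := fun a b => hsym a b
  have key : ∀ x : H, ‖A x‖ ^ 2 ≤ ‖A‖ * ‖x‖ ^ 2 := by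
    intro x
    set s : ℝ := ‖A‖⁻¹ with hs
    have hspos : 0 < s := inv_pos.2 hApos
    set u := A x with hu
    set w := x - (s : ℂ) • u with hw
    have h1x : RCLike.re ⟪A x, x⟫_ℂ ≤ ‖x‖ ^ 2 := by
      have h := h1.re_inner_nonneg_left x
      simp only [ContinuousLinearMap.sub_apply, ContinuousLinearMap.one_apply,
        inner_sub_left, map_sub] at h
      rw [inner_self_eq_norm_sq (𝕜 := ℂ)] at h
      linarith
    have hre2 : RCLike.re ⟪A u, x⟫_ℂ = ‖u‖ ^ 2 := by
      rw [hsym' u x, ← hu, inner_self_eq_norm_sq (𝕜 := ℂ)]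
    have hre3 : RCLike.re ⟪A u, u⟫_ℂ ≤ ‖A‖ * ‖u‖ ^ 2 := by
      calc RCLike.re ⟪A u, u⟫_ℂ ≤ ‖⟪A u, u⟫_ℂ‖ := RCLike.re_le_norm _
        _ ≤ ‖A u‖ * ‖u‖ := norm_inner_le_norm _ _
        _ ≤ (‖A‖ * ‖u‖) * ‖u‖ := by gcongr; exact A.le_opNorm u
        _ = ‖A‖ * ‖u‖ ^ 2 := by ring
    have hreC : ∀ z : ℂ, RCLike.re z = z.re := fun _ => rfl
    have hinner : ⟪A w, w⟫_ℂ = ⟪u, x⟫_ℂ - (s : ℂ) * ⟪u, u⟫_ℂ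
        - (s : ℂ) * ⟪A u, x⟫_ℂ + (s : ℂ) * ((s : ℂ) * ⟪A u, u⟫_ℂ) := by
      have hAw : A w = u - (s : ℂ) • A u := by rw [hw, map_sub, map_smul, hu]
      rw [hAw, hw]
      simp only [inner_sub_left, inner_sub_right, inner_smul_left, inner_smul_right,
        Complex.conj_ofReal]
      ring
    have hexp : RCLike.re ⟪A w, w⟫_ℂ
        = RCLike.re ⟪u, x⟫_ℂ - s * ‖u‖ ^ 2 - s * RCLike.re ⟪A u, x⟫_ℂ
          + s * (s * RCLike.re ⟪A u, u⟫_ℂ) := by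
      have huu : RCLike.re ⟪u, u⟫_ℂ = ‖u‖ ^ 2 := inner_self_eq_norm_sq (𝕜 := ℂ) u
      simp only [hreC] at huu ⊢
      rw [hinner]
      simp only [Complex.sub_re, Complex.add_re, Complex.re_ofReal_mul, huu]
    have h0w := hA.re_inner_nonneg_left w
    rw [hexp] at h0w
    have hux : RCLike.re ⟪u, x⟫_ℂ ≤ ‖x‖ ^ 2 := by rw [hu]; exact h1x
    have hcancel : s * s * ‖A‖ = s := by rw [hs]; field_simp
    have h5 : s * s * RCLike.re ⟪A u, u⟫_ℂ ≤ s * ‖u‖ ^ 2 := by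
      calc s * s * RCLike.re ⟪A u, u⟫_ℂ ≤ s * s * (‖A‖ * ‖u‖ ^ 2) :=
            mul_le_mul_of_nonneg_left hre3 (mul_nonneg hspos.le hspos.le)
        _ = (s * s * ‖A‖) * ‖u‖ ^ 2 := by ring
        _ = s * ‖u‖ ^ 2 := by rw [hcancel]
    have step1 : s * ‖u‖ ^ 2 ≤ ‖x‖ ^ 2 := by
      have hre2' : s * RCLike.re ⟪A u, x⟫_ℂ = s * ‖u‖ ^ 2 := by rw [hre2]
      linarith
    have hAs : ‖A‖ * s = 1 := mul_inv_cancel₀ h0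
    calc ‖A x‖ ^ 2 = ‖A‖ * (s * ‖u‖ ^ 2) := by rw [← mul_assoc, hAs, one_mul, hu]
      _ ≤ ‖A‖ * ‖x‖ ^ 2 := mul_le_mul_of_nonneg_left step1 (norm_nonneg _)
  have key2 : ∀ x : H, ‖A x‖ ≤ Real.sqrt ‖A‖ * ‖x‖ := by
    intro x
    have h := Real.sqrt_le_sqrt (key x)
    rwa [Real.sqrt_sq (norm_nonneg _), Real.sqrt_mul (norm_nonneg _), Real.sqrt_sq (norm_nonneg _)]
      at h
  have hle : ‖A‖ ≤ Real.sqrt ‖A‖ :=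
    ContinuousLinearMap.opNorm_le_bound _ (Real.sqrt_nonneg _) key2
  nlinarith [Real.sq_sqrt (norm_nonneg A), Real.sqrt_nonneg ‖A‖]

end Aux2

section Aux3
set_option linter.unusedSectionVars false
variable {H : Type} [NormedAddCommGroup H] [InnerProductSpace ℂ H] [CompleteSpace H]

lemma qc_norm_le_one {A : ℕ → H →L[ℂ] H} (hQC : IsQCSeq A) (m : ℕ) : ‖A m‖ ≤ 1 :=
  norm_le_one_of_pos (hQC.2.1 m) (hQC.2.2.1 m)

lemma tendsto_N_left_rk (I : NormedIdeal H) {A : ℕ → H →L[ℂ] H} (hQC : IsQCSeq A)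
    {e₀ : H} (he : ‖e₀‖ = 1) (ξ η : H) :
    Tendsto (fun m => I.N ((A m - 1) * rk ξ η)) atTop (nhds 0) := by
  have hcomp : ∀ m, (A m - 1) * rk ξ η = rk ξ (A m η - η) := by
    intro m
    rw [mul_rk]
    rfl
  have hbound : ∀ m, I.N ((A m - 1) * rk ξ η)
      ≤ ENNReal.ofReal ‖A m η - η‖ * (I.N (rk e₀ e₀) * ENNReal.ofReal ‖ξ‖) := by
    intro m
    rw [hcomp m]
    refine (N_rk_le I he ξ (A m η - η)).trans ?_
    rw [mul_assoc]
  have hd : Tendsto (fun m => ‖A m η - η‖) atTop (nhds 0) := by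
    have h := hQC.2.2.2.2 η
    rwa [tendsto_iff_norm_sub_tendsto_zero] at h
  have hC : I.N (rk e₀ e₀) * ENNReal.ofReal ‖ξ‖ ≠ ∞ :=
    ENNReal.mul_ne_top (I.finiteRank_mem _ (rk_finiteRank e₀ e₀)) ENNReal.ofReal_ne_top
  have hmain : Tendsto (fun m => ENNReal.ofReal ‖A m η - η‖
      * (I.N (rk e₀ e₀) * ENNReal.ofReal ‖ξ‖)) atTop (nhds 0) := by
    have h1 : Tendsto (fun m => ENNReal.ofReal ‖A m η - η‖) atTop (nhds 0) := by
      have := (ENNReal.continuous_ofReal.tendsto 0).comp hd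
      simpa [Function.comp_def] using this
    have := ENNReal.Tendsto.mul_const h1 (Or.inr hC)
    simpa using this
  exact tendsto_of_tendsto_of_tendsto_of_le_of_le tendsto_const_nhds hmain
    (fun m => zero_le) hbound

lemma tendsto_N_comm_fr (I : NormedIdeal H) {A : ℕ → H →L[ℂ] H} (hQC : IsQCSeq A)
    {e₀ : H} (he : ‖e₀‖ = 1) (F : H →L[ℂ] H) (hF : IsFiniteRank F) :
    Tendsto (fun m => I.N (A m * F - F * A m)) atTop (nhds 0) := by
  obtain ⟨k, ξ, η, hFdec⟩ := exists_rk_decomp F hF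
  have hleft : ∀ (ξ η : Fin k → H),
      Tendsto (fun m => I.N ((A m - 1) * ∑ i, rk (ξ i) (η i))) atTop (nhds 0) := by
    intro ξ η
    have hb : ∀ m, I.N ((A m - 1) * ∑ i, rk (ξ i) (η i))
        ≤ ∑ i, I.N ((A m - 1) * rk (ξ i) (η i)) := by
      intro m
      rw [Finset.mul_sum]
      exact N_sum_le I _ _
    have hsum : Tendsto (fun m => ∑ i, I.N ((A m - 1) * rk (ξ i) (η i))) atTop (nhds 0) := by
      have := tendsto_finset_sum (Finset.univ : Finset (Fin k))
        (fun i _ => tendsto_N_left_rk I hQC he (ξ i) (η i))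
      simpa using this
    exact tendsto_of_tendsto_of_tendsto_of_le_of_le tendsto_const_nhds hsum
      (fun m => zero_le) hb
  -- right side via adjoints
  have hadj : ∀ m, I.N (F * (A m - 1))
      = I.N ((A m - 1) * ∑ i, rk (η i) (ξ i)) := by
    intro m
    have hsa : ContinuousLinearMap.adjoint (A m - 1) = A m - 1 := by
      have h1 : IsSelfAdjoint (A m) := (hQC.2.1 m).isSelfAdjoint
      rw [map_sub]
      rw [← ContinuousLinearMap.star_eq_adjoint, ← ContinuousLinearMap.star_eq_adjoint, h1]
      simp
    have hFadj : ContinuousLinearMap.adjoint F = ∑ i, rk (η i) (ξ i) := by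
      rw [hFdec, map_sum]
      exact Finset.sum_congr rfl fun i _ => adjoint_rk _ _
    have : ContinuousLinearMap.adjoint ((A m - 1) * ∑ i, rk (η i) (ξ i)) = F * (A m - 1) := by
      have hc := ContinuousLinearMap.adjoint_comp (A m - 1) (∑ i, rk (η i) (ξ i))
      rw [show (A m - 1) * (∑ i, rk (η i) (ξ i)) = (A m - 1).comp (∑ i, rk (η i) (ξ i)) from rfl,
        hc, hsa, ← hFadj, ContinuousLinearMap.adjoint_adjoint]
      rfl
    rw [← this, I.adjoint_eq]
  have hright : Tendsto (fun m => I.N (F * (A m - 1))) atTop (nhds 0) := by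
    have := hleft η ξ
    simpa only [← hadj] using this
  have hsplit : ∀ m, A m * F - F * A m = (A m - 1) * F - F * (A m - 1) := by
    intro m
    simp only [sub_mul, mul_sub, one_mul, mul_one]
    abel
  have hboth : Tendsto (fun m => I.N ((A m - 1) * F) + I.N (F * (A m - 1))) atTop (nhds 0) := by
    have h := Tendsto.add (hFdec ▸ hleft ξ η) hright
    simpa using h
  refine tendsto_of_tendsto_of_tendsto_of_le_of_le tendsto_const_nhds hboth
    (fun m => zero_le) (fun m => ?_)
  rw [hsplit m]
  exact N_sub_le I _ _

end Aux3

section Aux4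
set_option linter.unusedSectionVars false
variable {H : Type} [NormedAddCommGroup H] [InnerProductSpace ℂ H] [CompleteSpace H]

lemma N_mul_le_left_one (I : NormedIdeal H) {B : H →L[ℂ] H} (hB : ‖B‖ ≤ 1) (X : H →L[ℂ] H) :
    I.N (B * X) ≤ I.N X := by
  refine (N_mul_le_left I B X).trans ?_
  calc ENNReal.ofReal ‖B‖ * I.N X ≤ 1 * I.N X := by
        gcongr
        exact ENNReal.ofReal_le_one.2 hB
    _ = I.N X := one_mul _

lemma N_mul_le_right_one (I : NormedIdeal H) {B : H →L[ℂ] H} (hB : ‖B‖ ≤ 1) (X : H →L[ℂ] H) :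
    I.N (X * B) ≤ I.N X := by
  refine (N_mul_le_right I X B).trans ?_
  calc I.N X * ENNReal.ofReal ‖B‖ ≤ I.N X * 1 := by
        gcongr
        exact ENNReal.ofReal_le_one.2 hB
    _ = I.N X := mul_one _

lemma tendsto_N_comm_mem (I : NormedIdeal H) (hdense : I.RDense) {A : ℕ → H →L[ℂ] H}
    (hQC : IsQCSeq A) {e₀ : H} (he : ‖e₀‖ = 1) (X : H →L[ℂ] H) (hX : I.N X ≠ ∞) :
    Tendsto (fun m => I.N (A m * X - X * A m)) atTop (nhds 0) := by
  rw [ENNReal.tendsto_nhds_zero]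
  intro ε hε
  rcases eq_top_or_lt_top ε with rfl | hlt
  · exact Eventually.of_forall fun m => le_top
  set r : ℝ := ε.toReal / 3 with hr
  have hrpos : 0 < r := by
    rw [hr]
    have := ENNReal.toReal_pos hε.ne' hlt.ne
    linarith
  obtain ⟨F, hFfr, hFN⟩ := hdense X hX r hrpos
  have hcomm := tendsto_N_comm_fr I hQC he F hFfr
  have hev := (ENNReal.tendsto_nhds_zero.1 hcomm) (ENNReal.ofReal r) (ENNReal.ofReal_pos.2 hrpos)
  filter_upwards [hev] with m hm
  have hAn : ‖A m‖ ≤ 1 := qc_norm_le_one hQC m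
  have hsplit : A m * X - X * A m
      = (A m * F - F * A m) + (A m * (X - F) - (X - F) * A m) := by
    simp only [mul_sub, sub_mul]
    abel
  have h1 : I.N (A m * (X - F)) ≤ I.N (X - F) := N_mul_le_left_one I hAn _
  have h2 : I.N ((X - F) * A m) ≤ I.N (X - F) := N_mul_le_right_one I hAn _
  calc I.N (A m * X - X * A m)
      ≤ I.N (A m * F - F * A m) + I.N (A m * (X - F) - (X - F) * A m) := by
        rw [hsplit]; exact I.add_le _ _
    _ ≤ ENNReal.ofReal r + (I.N (A m * (X - F)) + I.N ((X - F) * A m)) :=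
        add_le_add hm (N_sub_le I _ _)
    _ ≤ ENNReal.ofReal r + (ENNReal.ofReal r + ENNReal.ofReal r) := by
        gcongr
        · exact h1.trans hFN.le
        · exact h2.trans hFN.le
    _ = ENNReal.ofReal (r + (r + r)) := by
        rw [ENNReal.ofReal_add hrpos.le (by linarith), ENNReal.ofReal_add hrpos.le hrpos.le]
    _ ≤ ε := by
        rw [show r + (r + r) = ε.toReal by rw [hr]; ring]
        rw [ENNReal.ofReal_toReal hlt.ne]

lemma tendsto_sup_shift (I : NormedIdeal H) (hdense : I.RDense) {A : ℕ → H →L[ℂ] H}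
    (hQC : IsQCSeq A) {e₀ : H} (he : ‖e₀‖ = 1) {n : ℕ} {T T' : Fin n → H →L[ℂ] H}
    (hmem : ∀ j, I.N (T j - T' j) ≠ ∞) {C : ℝ≥0∞}
    (h : Tendsto (fun m => Finset.univ.sup fun j => I.N (A m * T j - T j * A m)) atTop (nhds C)) :
    Tendsto (fun m => Finset.univ.sup fun j => I.N (A m * T' j - T' j * A m)) atTop (nhds C) := by
  have hS0 : Tendsto (fun m => ∑ j, I.N (A m * (T j - T' j) - (T j - T' j) * A m))
      atTop (nhds 0) := by
    have := tendsto_finset_sum (Finset.univ : Finset (Fin n))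
      (fun j _ => tendsto_N_comm_mem I hdense hQC he _ (hmem j))
    simpa using this
  have hf_le : ∀ m, (Finset.univ.sup fun j => I.N (A m * T' j - T' j * A m))
      ≤ (Finset.univ.sup fun j => I.N (A m * T j - T j * A m))
        + ∑ j, I.N (A m * (T j - T' j) - (T j - T' j) * A m) := by
    intro m
    refine Finset.sup_le fun j _ => ?_
    have hsplit : A m * T' j - T' j * A m
        = (A m * T j - T j * A m) - (A m * (T j - T' j) - (T j - T' j) * A m) := by
      simp only [mul_sub, sub_mul]
      abel
    have h1 : I.N (A m * T' j - T' j * A m)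
        ≤ I.N (A m * T j - T j * A m) + I.N (A m * (T j - T' j) - (T j - T' j) * A m) := by
      rw [hsplit]; exact N_sub_le I _ _
    refine h1.trans (add_le_add ?_ ?_)
    · exact Finset.le_sup (f := fun j => I.N (A m * T j - T j * A m)) (Finset.mem_univ j)
    · exact Finset.single_le_sum
        (f := fun j => I.N (A m * (T j - T' j) - (T j - T' j) * A m))
        (fun _ _ => zero_le) (Finset.mem_univ j)
  have hg_le : ∀ m, (Finset.univ.sup fun j => I.N (A m * T j - T j * A m))
      ≤ (Finset.univ.sup fun j => I.N (A m * T' j - T' j * A m))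
        + ∑ j, I.N (A m * (T j - T' j) - (T j - T' j) * A m) := by
    intro m
    refine Finset.sup_le fun j _ => ?_
    have hsplit : A m * T j - T j * A m
        = (A m * T' j - T' j * A m) + (A m * (T j - T' j) - (T j - T' j) * A m) := by
      simp only [mul_sub, sub_mul]
      abel
    have h1 : I.N (A m * T j - T j * A m)
        ≤ I.N (A m * T' j - T' j * A m) + I.N (A m * (T j - T' j) - (T j - T' j) * A m) := by
      rw [hsplit]; exact I.add_le _ _
    refine h1.trans (add_le_add ?_ ?_)
    · exact Finset.le_sup (f := fun j => I.N (A m * T' j - T' j * A m)) (Finset.mem_univ j)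
    · exact Finset.single_le_sum
        (f := fun j => I.N (A m * (T j - T' j) - (T j - T' j) * A m))
        (fun _ _ => zero_le) (Finset.mem_univ j)
  have hupper : Tendsto (fun m => (Finset.univ.sup fun j => I.N (A m * T j - T j * A m))
      + ∑ j, I.N (A m * (T j - T' j) - (T j - T' j) * A m)) atTop (nhds C) := by
    have := Tendsto.add h hS0
    simpa using this
  have hlower : Tendsto (fun m => (Finset.univ.sup fun j => I.N (A m * T j - T j * A m))
      - ∑ j, I.N (A m * (T j - T' j) - (T j - T' j) * A m)) atTop (nhds C) := by
    have := ENNReal.Tendsto.sub h hS0 (Or.inr ENNReal.zero_ne_top)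
    simpa using this
  exact tendsto_of_tendsto_of_tendsto_of_le_of_le hlower hupper
    (fun m => tsub_le_iff_right.2 (hg_le m)) hf_le

end Aux4


/-- **Property 3° of `k_I`: invariance under perturbations from `I`.** If the finite rank
operators are dense in the normed ideal `I` and `τ, τ'` are `n`-tuples with
`Tⱼ - T'ⱼ ∈ I` for all `j`, then `k_I(τ) = k_I(τ')`. -/
theorem kQ_eq_of_sub_mem
    {H : Type} [NormedAddCommGroup H] [InnerProductSpace ℂ H] [CompleteSpace H]
    [TopologicalSpace.SeparableSpace H] (hdim : ¬ FiniteDimensional ℂ H)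
    (I : NormedIdeal H) (hdense : I.RDense)
    {n : ℕ} (T T' : Fin n → H →L[ℂ] H)
    (hmem : ∀ j, I.N (T j - T' j) ≠ ∞) :
    kQ I.N T = kQ I.N T' := by
  have hnt : Nontrivial H := by
    by_contra hn
    rw [not_nontrivial_iff_subsingleton] at hn
    exact hdim (Module.Finite.of_basis (Module.Basis.empty H (ι := Fin 0)))
  obtain ⟨x, hx⟩ := exists_ne (0 : H)
  have he : ‖((‖x‖ : ℂ)⁻¹ • x)‖ = 1 := norm_smul_inv_norm hx
  have hmem' : ∀ j, I.N (T' j - T j) ≠ ∞ := by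
    intro j
    rw [show T' j - T j = -(T j - T' j) from (neg_sub _ _).symm, N_neg]
    exact hmem j
  unfold kQ
  congr 1
  ext C
  constructor
  · rintro ⟨A, hQC, hT⟩
    exact ⟨A, hQC, tendsto_sup_shift I hdense hQC he hmem hT⟩
  · rintro ⟨A, hQC, hT⟩
    exact ⟨A, hQC, tendsto_sup_shift I hdense hQC he hmem' hT⟩


end
end

section
/- If n ≥ 2 and S₁,…,Sₙ are isometries on H with pairwise orthogonal ranges, then k_∞^-(S₁,…,Sₙ) > 0. -/
set_option linter.unusedSectionVars false
set_option linter.unusedVariables false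
set_option linter.unusedTactic false


open scoped ENNReal InnerProductSpace Classical
open Filter

noncomputable section

variable {E : Type*} [NormedAddCommGroup E] [InnerProductSpace ℂ E] [CompleteSpace E]

def RankLe (F : E →L[ℂ] E) (k : ℕ) : Prop :=
  IsFiniteRank F ∧ Module.finrank ℂ (LinearMap.range (F : E →ₗ[ℂ] E)) ≤ k

lemma isFiniteRank_zero : IsFiniteRank (0 : E →L[ℂ] E) := by
  have h : ((0 : E →L[ℂ] E) : E →ₗ[ℂ] E) = 0 := rfl
  rw [IsFiniteRank, h, LinearMap.range_zero]
  infer_instance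

lemma rankLe_zero (k : ℕ) : RankLe (0 : E →L[ℂ] E) k := by
  refine ⟨isFiniteRank_zero, ?_⟩
  have h : ((0 : E →L[ℂ] E) : E →ₗ[ℂ] E) = 0 := rfl
  rw [h, LinearMap.range_zero]
  simp

lemma RankLe.add {F G : E →L[ℂ] E} {a b : ℕ} (hF : RankLe F a) (hG : RankLe G b) :
    RankLe (F + G) (a + b) := by
  obtain ⟨hF1, hF2⟩ := hF
  obtain ⟨hG1, hG2⟩ := hG
  haveI : FiniteDimensional ℂ (LinearMap.range (F : E →ₗ[ℂ] E)) := hF1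
  haveI : FiniteDimensional ℂ (LinearMap.range (G : E →ₗ[ℂ] E)) := hG1
  have hle : LinearMap.range ((F + G : E →L[ℂ] E) : E →ₗ[ℂ] E) ≤
      LinearMap.range (F : E →ₗ[ℂ] E) ⊔ LinearMap.range (G : E →ₗ[ℂ] E) := by
    rintro x ⟨y, rfl⟩
    exact Submodule.add_mem_sup (LinearMap.mem_range_self _ y) (LinearMap.mem_range_self _ y)
  haveI : FiniteDimensional ℂ
      (LinearMap.range (F : E →ₗ[ℂ] E) ⊔ LinearMap.range (G : E →ₗ[ℂ] E) : Submodule ℂ E) :=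
    Submodule.finiteDimensional_sup _ _
  refine ⟨Submodule.finiteDimensional_of_le hle, ?_⟩
  exact (Submodule.finrank_mono hle).trans
    ((Submodule.finrank_add_le_finrank_add_finrank _ _).trans (add_le_add hF2 hG2))

lemma RankLe.mul_left (U : E →L[ℂ] E) {F : E →L[ℂ] E} {k : ℕ} (hF : RankLe F k) :
    RankLe (U * F) k := by
  obtain ⟨hF1, hF2⟩ := hF
  haveI : FiniteDimensional ℂ (LinearMap.range (F : E →ₗ[ℂ] E)) := hF1
  have hle : LinearMap.range ((U * F : E →L[ℂ] E) : E →ₗ[ℂ] E) ≤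
      (LinearMap.range (F : E →ₗ[ℂ] E)).map (U : E →ₗ[ℂ] E) := by
    rintro x ⟨y, rfl⟩
    exact ⟨F y, LinearMap.mem_range_self _ y, rfl⟩
  haveI : FiniteDimensional ℂ ((LinearMap.range (F : E →ₗ[ℂ] E)).map (U : E →ₗ[ℂ] E)) :=
    Module.Finite.map _ _
  refine ⟨Submodule.finiteDimensional_of_le hle, ?_⟩
  exact (Submodule.finrank_mono hle).trans ((Submodule.finrank_map_le _ _).trans hF2)

lemma RankLe.mul_right (V : E →L[ℂ] E) {F : E →L[ℂ] E} {k : ℕ} (hF : RankLe F k) :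
    RankLe (F * V) k := by
  obtain ⟨hF1, hF2⟩ := hF
  haveI : FiniteDimensional ℂ (LinearMap.range (F : E →ₗ[ℂ] E)) := hF1
  have hle : LinearMap.range ((F * V : E →L[ℂ] E) : E →ₗ[ℂ] E) ≤
      LinearMap.range (F : E →ₗ[ℂ] E) := by
    rintro x ⟨y, rfl⟩
    exact LinearMap.mem_range_self _ (V y)
  refine ⟨Submodule.finiteDimensional_of_le hle, ?_⟩
  exact (Submodule.finrank_mono hle).trans hF2

lemma RankLe.neg {F : E →L[ℂ] E} {k : ℕ} (hF : RankLe F k) : RankLe (-F) k := by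
  obtain ⟨hF1, hF2⟩ := hF
  haveI : FiniteDimensional ℂ (LinearMap.range (F : E →ₗ[ℂ] E)) := hF1
  have h : LinearMap.range ((-F : E →L[ℂ] E) : E →ₗ[ℂ] E) = LinearMap.range (F : E →ₗ[ℂ] E) := by
    have : ((-F : E →L[ℂ] E) : E →ₗ[ℂ] E) = -(F : E →ₗ[ℂ] E) := rfl
    rw [this, LinearMap.range_neg]
  rw [RankLe, IsFiniteRank, h]
  exact ⟨hF1, hF2⟩

-- sVal basic lemmas
lemma sVal_bddBelow (T : E →L[ℂ] E) (j : ℕ) :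
    BddBelow {r | ∃ F : E →L[ℂ] E, IsFiniteRank F ∧
      Module.finrank ℂ (LinearMap.range (F : E →ₗ[ℂ] E)) ≤ j ∧ r = ‖T - F‖} := by
  refine ⟨0, ?_⟩
  rintro r ⟨F, _, _, rfl⟩
  exact norm_nonneg _

lemma sVal_set_nonempty (T : E →L[ℂ] E) (j : ℕ) :
    Set.Nonempty {r | ∃ F : E →L[ℂ] E, IsFiniteRank F ∧
      Module.finrank ℂ (LinearMap.range (F : E →ₗ[ℂ] E)) ≤ j ∧ r = ‖T - F‖} :=
  ⟨‖T‖, 0, (rankLe_zero j).1, (rankLe_zero j).2, by simp⟩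

lemma sVal_le {T F : E →L[ℂ] E} {j : ℕ} (hF : RankLe F j) : sVal T j ≤ ‖T - F‖ :=
  csInf_le (sVal_bddBelow T j) ⟨F, hF.1, hF.2, rfl⟩

lemma le_sVal {T : E →L[ℂ] E} {j : ℕ} {c : ℝ}
    (h : ∀ F : E →L[ℂ] E, RankLe F j → c ≤ ‖T - F‖) : c ≤ sVal T j := by
  refine le_csInf (sVal_set_nonempty T j) ?_
  rintro r ⟨F, h1, h2, rfl⟩
  exact h F ⟨h1, h2⟩

lemma sVal_nonneg (T : E →L[ℂ] E) (j : ℕ) : 0 ≤ sVal T j :=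
  le_sVal fun F _ => norm_nonneg _

lemma sVal_le_norm (T : E →L[ℂ] E) (j : ℕ) : sVal T j ≤ ‖T‖ := by
  simpa using sVal_le (T := T) (rankLe_zero j)

lemma sVal_lt {T : E →L[ℂ] E} {j : ℕ} {c : ℝ} (h : sVal T j < c) :
    ∃ F : E →L[ℂ] E, RankLe F j ∧ ‖T - F‖ < c := by
  obtain ⟨r, ⟨F, h1, h2, rfl⟩, hlt⟩ := exists_lt_of_csInf_lt (sVal_set_nonempty T j) h
  exact ⟨F, ⟨h1, h2⟩, hlt⟩

lemma sVal_antitone (T : E →L[ℂ] E) {j k : ℕ} (h : j ≤ k) : sVal T k ≤ sVal T j := by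
  refine csInf_le_csInf (sVal_bddBelow T k) (sVal_set_nonempty T j) ?_
  rintro r ⟨F, h1, h2, rfl⟩
  exact ⟨F, h1, h2.trans h, rfl⟩

lemma sVal_add_le (X Y : E →L[ℂ] E) (a b : ℕ) :
    sVal (X + Y) (a + b) ≤ sVal X a + sVal Y b := by
  refine le_of_forall_pos_le_add fun ε hε => ?_
  obtain ⟨F, hF, hFn⟩ := sVal_lt (show sVal X a < sVal X a + ε / 2 by linarith)
  obtain ⟨G, hG, hGn⟩ := sVal_lt (show sVal Y b < sVal Y b + ε / 2 by linarith)
  have h1 : sVal (X + Y) (a + b) ≤ ‖X + Y - (F + G)‖ := sVal_le (hF.add hG)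
  have h2 : X + Y - (F + G) = (X - F) + (Y - G) := by abel
  calc sVal (X + Y) (a + b) ≤ ‖(X - F) + (Y - G)‖ := by rw [← h2]; exact h1
    _ ≤ ‖X - F‖ + ‖Y - G‖ := norm_add_le _ _
    _ ≤ sVal X a + sVal Y b + ε := by linarith

lemma sVal_mul_le (U X V : E →L[ℂ] E) (j : ℕ) :
    sVal (U * X * V) j ≤ ‖U‖ * ‖V‖ * sVal X j := by
  refine le_of_forall_pos_le_add fun ε hε => ?_
  have hd : (0:ℝ) < ‖U‖ * ‖V‖ + 1 := by positivity
  obtain ⟨F, hF, hFn⟩ := sVal_lt (show sVal X j < sVal X j + ε / (‖U‖ * ‖V‖ + 1) by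
    have := div_pos hε hd; linarith)
  have h1 : sVal (U * X * V) j ≤ ‖U * X * V - U * F * V‖ :=
    sVal_le ((hF.mul_left U).mul_right V)
  have h2 : U * X * V - U * F * V = U * (X - F) * V := by noncomm_ring
  have h3 : ‖U * (X - F) * V‖ ≤ ‖U‖ * ‖X - F‖ * ‖V‖ :=
    (norm_mul_le _ _).trans (by
      have := norm_mul_le U (X - F)
      nlinarith [norm_nonneg V, norm_nonneg (U * (X-F)), norm_nonneg (X - F), norm_nonneg U])
  have h4 : ‖U‖ * ‖X - F‖ * ‖V‖ ≤ ‖U‖ * ‖V‖ * (sVal X j + ε / (‖U‖ * ‖V‖ + 1)) := by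
    have h4a : ‖U‖ * ‖X - F‖ * ‖V‖ = ‖U‖ * ‖V‖ * ‖X - F‖ := by ring
    rw [h4a]
    exact mul_le_mul_of_nonneg_left hFn.le (by positivity)
  have h5 : ‖U‖ * ‖V‖ * (sVal X j + ε / (‖U‖ * ‖V‖ + 1)) ≤ ‖U‖ * ‖V‖ * sVal X j + ε := by
    have h6 : ‖U‖ * ‖V‖ * (ε / (‖U‖ * ‖V‖ + 1)) ≤ ε := by
      rw [div_eq_inv_mul]
      have : ‖U‖ * ‖V‖ * ((‖U‖ * ‖V‖ + 1)⁻¹ * ε) = (‖U‖ * ‖V‖) * (‖U‖ * ‖V‖ + 1)⁻¹ * ε := by ring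
      rw [this]
      have h7 : (‖U‖ * ‖V‖) * (‖U‖ * ‖V‖ + 1)⁻¹ ≤ 1 := by
        rw [mul_inv_le_iff₀ hd]; nlinarith [norm_nonneg U, norm_nonneg V]
      nlinarith
    nlinarith
  linarith [h1.trans (h2 ▸ h3)]

lemma sVal_neg (X : E →L[ℂ] E) (j : ℕ) : sVal (-X) j = sVal X j := by
  have key : ∀ Y : E →L[ℂ] E, sVal (-Y) j ≤ sVal Y j := by
    intro Y
    refine le_of_forall_pos_le_add fun ε hε => ?_
    obtain ⟨F, hF, hFn⟩ := sVal_lt (show sVal Y j < sVal Y j + ε by linarith)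
    have h1 : sVal (-Y) j ≤ ‖-Y - -F‖ := sVal_le hF.neg
    have h2 : -Y - -F = -(Y - F) := by abel
    rw [h2, norm_neg] at h1
    linarith
  refine le_antisymm (key X) ?_
  have := key (-X)
  rwa [neg_neg] at this


lemma lorentzNorm_top (T : E →L[ℂ] E) :
    lorentzNorm ∞ T = ∑' j : ℕ, ENNReal.ofReal (sVal T j * ((j : ℝ) + 1)⁻¹) := by
  unfold lorentzNorm
  congr 1
  funext j
  congr 2
  have h1 : ((1 : ℝ≥0∞) / ∞).toReal - 1 = -1 := by simp
  rw [h1, Real.rpow_neg_one]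

lemma sVal_zero_op (j : ℕ) : sVal (0 : E →L[ℂ] E) j = 0 :=
  le_antisymm (by simpa using sVal_le_norm (0 : E →L[ℂ] E) j) (sVal_nonneg _ _)

lemma lorentzNorm_zero : lorentzNorm ∞ (0 : E →L[ℂ] E) = 0 := by
  rw [lorentzNorm_top]
  simp [sVal_zero_op]

lemma lorentzNorm_ne_top {T : E →L[ℂ] E} (h : IsFiniteRank T) : lorentzNorm ∞ T ≠ ∞ := by
  set r := Module.finrank ℂ (LinearMap.range (T : E →ₗ[ℂ] E)) with hr
  have hz : ∀ j, r ≤ j → sVal T j = 0 := fun j hj =>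
    le_antisymm (by simpa using sVal_le (T := T) (F := T) ⟨h, hj⟩) (sVal_nonneg _ _)
  rw [lorentzNorm_top, tsum_eq_sum (s := Finset.range r)
    (fun j hj => by rw [hz j (by simpa using hj)]; simp)]
  exact (ENNReal.sum_lt_top.mpr fun i _ => ENNReal.ofReal_lt_top).ne

lemma lorentzNorm_mono_sval {X Y : E →L[ℂ] E} (h : ∀ j, sVal Y j ≤ sVal X j) :
    lorentzNorm ∞ Y ≤ lorentzNorm ∞ X := by
  rw [lorentzNorm_top, lorentzNorm_top]
  refine ENNReal.tsum_le_tsum fun j => ENNReal.ofReal_le_ofReal ?_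
  exact mul_le_mul_of_nonneg_right (h j) (by positivity)

lemma lorentzNorm_neg (X : E →L[ℂ] E) : lorentzNorm ∞ (-X) = lorentzNorm ∞ X :=
  le_antisymm (lorentzNorm_mono_sval fun j => (sVal_neg X j).le)
    (lorentzNorm_mono_sval fun j => by rw [sVal_neg])

lemma lorentzNorm_mul_le (U X V : E →L[ℂ] E) (hU : ‖U‖ ≤ 1) (hV : ‖V‖ ≤ 1) :
    lorentzNorm ∞ (U * X * V) ≤ lorentzNorm ∞ X := by
  refine lorentzNorm_mono_sval fun j => (sVal_mul_le U X V j).trans ?_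
  have h1 : ‖U‖ * ‖V‖ ≤ 1 := mul_le_one₀ hU (norm_nonneg V) hV
  calc ‖U‖ * ‖V‖ * sVal X j ≤ 1 * sVal X j :=
        mul_le_mul_of_nonneg_right h1 (sVal_nonneg X j)
    _ = sVal X j := one_mul _

lemma lorentzNorm_half_aux (Z : E →L[ℂ] E) :
    (∑' m : ℕ, ENNReal.ofReal (sVal Z (m / 2) * ((m : ℝ) + 1)⁻¹)) ≤ 2 * lorentzNorm ∞ Z := by
  rw [lorentzNorm_top]
  rw [← tsum_even_add_odd (f := fun m : ℕ => ENNReal.ofReal (sVal Z (m / 2) * ((m : ℝ) + 1)⁻¹))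
    ENNReal.summable ENNReal.summable]
  have he : ∀ k : ℕ, ENNReal.ofReal (sVal Z ((2 * k) / 2) * (((2 * k : ℕ) : ℝ) + 1)⁻¹) ≤
      ENNReal.ofReal (sVal Z k * ((k : ℝ) + 1)⁻¹) := by
    intro k
    have h1 : (2 * k) / 2 = k := by omega
    rw [h1]
    refine ENNReal.ofReal_le_ofReal (mul_le_mul_of_nonneg_left ?_ (sVal_nonneg _ _))
    rw [inv_le_inv₀ (by positivity) (by positivity)]
    push_cast; linarith [Nat.cast_nonneg (α := ℝ) k]
  have ho : ∀ k : ℕ, ENNReal.ofReal (sVal Z ((2 * k + 1) / 2) * (((2 * k + 1 : ℕ) : ℝ) + 1)⁻¹) ≤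
      ENNReal.ofReal (sVal Z k * ((k : ℝ) + 1)⁻¹) := by
    intro k
    have h1 : (2 * k + 1) / 2 = k := by omega
    rw [h1]
    refine ENNReal.ofReal_le_ofReal (mul_le_mul_of_nonneg_left ?_ (sVal_nonneg _ _))
    rw [inv_le_inv₀ (by positivity) (by positivity)]
    push_cast; linarith [Nat.cast_nonneg (α := ℝ) k]
  calc (∑' k : ℕ, ENNReal.ofReal (sVal Z ((2 * k) / 2) * (((2 * k : ℕ) : ℝ) + 1)⁻¹)) +
        ∑' k : ℕ, ENNReal.ofReal (sVal Z ((2 * k + 1) / 2) * (((2 * k + 1 : ℕ) : ℝ) + 1)⁻¹)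
      ≤ (∑' k : ℕ, ENNReal.ofReal (sVal Z k * ((k : ℝ) + 1)⁻¹)) +
        ∑' k : ℕ, ENNReal.ofReal (sVal Z k * ((k : ℝ) + 1)⁻¹) :=
        add_le_add (ENNReal.tsum_le_tsum he) (ENNReal.tsum_le_tsum ho)
    _ = 2 * ∑' k : ℕ, ENNReal.ofReal (sVal Z k * ((k : ℝ) + 1)⁻¹) := (two_mul _).symm

lemma lorentzNorm_add_le (X Y : E →L[ℂ] E) :
    lorentzNorm ∞ (X + Y) ≤ 2 * (lorentzNorm ∞ X + lorentzNorm ∞ Y) := by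
  have hs : ∀ m : ℕ, sVal (X + Y) m ≤ sVal X (m / 2) + sVal Y (m / 2) := by
    intro m
    have h0 : m / 2 + (m - m / 2) = m := by omega
    have h1 := sVal_add_le X Y (m / 2) (m - m / 2)
    rw [h0] at h1
    exact h1.trans (add_le_add_right (sVal_antitone Y (by omega)) _)
  calc lorentzNorm ∞ (X + Y)
      = ∑' m : ℕ, ENNReal.ofReal (sVal (X + Y) m * ((m : ℝ) + 1)⁻¹) := lorentzNorm_top _
    _ ≤ ∑' m : ℕ, (ENNReal.ofReal (sVal X (m / 2) * ((m : ℝ) + 1)⁻¹) +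
          ENNReal.ofReal (sVal Y (m / 2) * ((m : ℝ) + 1)⁻¹)) := by
        refine ENNReal.tsum_le_tsum fun m => ?_
        refine le_trans (ENNReal.ofReal_le_ofReal
          (mul_le_mul_of_nonneg_right (hs m) (by positivity))) ?_
        rw [add_mul]
        exact ENNReal.ofReal_add_le
    _ = (∑' m : ℕ, ENNReal.ofReal (sVal X (m / 2) * ((m : ℝ) + 1)⁻¹)) +
        ∑' m : ℕ, ENNReal.ofReal (sVal Y (m / 2) * ((m : ℝ) + 1)⁻¹) := ENNReal.tsum_add
    _ ≤ 2 * lorentzNorm ∞ X + 2 * lorentzNorm ∞ Y :=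
        add_le_add (lorentzNorm_half_aux X) (lorentzNorm_half_aux Y)
    _ = 2 * (lorentzNorm ∞ X + lorentzNorm ∞ Y) := by ring

lemma lorentzNorm_sum_le {ι : Type*} (s : Finset ι) (f : ι → E →L[ℂ] E) :
    lorentzNorm ∞ (∑ i ∈ s, f i) ≤ 2 ^ s.card * ∑ i ∈ s, lorentzNorm ∞ (f i) := by
  classical
  induction s using Finset.induction_on with
  | empty => simp [lorentzNorm_zero]
  | insert a s ha ih =>
    rw [Finset.sum_insert ha, Finset.sum_insert ha, Finset.card_insert_of_notMem ha]
    calc lorentzNorm ∞ (f a + ∑ i ∈ s, f i)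
        ≤ 2 * (lorentzNorm ∞ (f a) + lorentzNorm ∞ (∑ i ∈ s, f i)) := lorentzNorm_add_le _ _
      _ ≤ 2 * (lorentzNorm ∞ (f a) + 2 ^ s.card * ∑ i ∈ s, lorentzNorm ∞ (f i)) := by gcongr
      _ = 2 * lorentzNorm ∞ (f a) + 2 * 2 ^ s.card * ∑ i ∈ s, lorentzNorm ∞ (f i) := by ring
      _ ≤ 2 ^ (s.card + 1) * lorentzNorm ∞ (f a) +
          2 ^ (s.card + 1) * ∑ i ∈ s, lorentzNorm ∞ (f i) := by
          gcongr
          · exact le_self_pow₀ one_le_two (by omega)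
          · rw [pow_succ, mul_comm ((2:ℝ≥0∞) ^ s.card) 2]
      _ = 2 ^ (s.card + 1) * (lorentzNorm ∞ (f a) + ∑ i ∈ s, lorentzNorm ∞ (f i)) := by ring


lemma norm_sub_lower {B F : E →L[ℂ] E} {c : ℝ} (U : Submodule ℂ E)
    [FiniteDimensional ℂ U] (hF : IsFiniteRank F)
    (hrank : Module.finrank ℂ (LinearMap.range (F : E →ₗ[ℂ] E)) < Module.finrank ℂ U)
    (hB : ∀ u, u ∈ U → c * ‖u‖ ^ 2 ≤ RCLike.re (⟪u, B u⟫_ℂ)) :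
    c ≤ ‖B - F‖ := by
  haveI : FiniteDimensional ℂ (LinearMap.range (F : E →ₗ[ℂ] E)) := hF
  set Fl := (F : E →ₗ[ℂ] E) with hFl
  set L : U →ₗ[ℂ] LinearMap.range Fl :=
    (Fl.domRestrict U).codRestrict (LinearMap.range Fl)
      (fun x => LinearMap.mem_range_self _ _) with hLdef
  have hnotinj : ¬ Function.Injective L := by
    intro hinj
    have := LinearMap.finrank_le_finrank_of_injective hinj
    omega
  have hker : ∃ u : U, L u = 0 ∧ u ≠ 0 := by
    by_contra hcon
    push_neg at hcon
    exact hnotinj (LinearMap.ker_eq_bot.mp (LinearMap.ker_eq_bot'.mpr hcon))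
  obtain ⟨u, hLu, hu0⟩ := hker
  have hFu : F (u : E) = 0 := by
    have h1 : ((L u : LinearMap.range Fl) : E) = Fl (u : E) := rfl
    rw [hLu] at h1
    simpa [hFl] using h1.symm
  have hun : (0:ℝ) < ‖(u : E)‖ := by
    rw [norm_pos_iff]
    exact fun h => hu0 (Subtype.ext h)
  have h1 : c * ‖(u:E)‖ ^ 2 ≤ RCLike.re (⟪(u:E), (B - F) (u:E)⟫_ℂ) := by
    rw [ContinuousLinearMap.sub_apply, hFu, sub_zero]
    exact hB _ u.2
  have h2 : RCLike.re (⟪(u:E), (B - F) (u:E)⟫_ℂ) ≤ ‖B - F‖ * ‖(u:E)‖ ^ 2 := by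
    calc RCLike.re (⟪(u:E), (B - F) (u:E)⟫_ℂ) ≤ ‖(⟪(u:E), (B - F) (u:E)⟫_ℂ)‖ :=
          RCLike.re_le_norm _
      _ ≤ ‖(u:E)‖ * ‖(B - F) (u:E)‖ := norm_inner_le_norm _ _
      _ ≤ ‖(u:E)‖ * (‖B - F‖ * ‖(u:E)‖) :=
          mul_le_mul_of_nonneg_left ((B - F).le_opNorm _) (norm_nonneg _)
      _ = ‖B - F‖ * ‖(u:E)‖ ^ 2 := by ring
  exact le_of_mul_le_mul_right (h1.trans h2) (pow_pos hun 2)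

lemma exists_eigen (A : E →L[ℂ] E) (hfr : IsFiniteRank A) (hpos : A.IsPositive) :
    ∃ (r : ℕ) (e : Fin r → E) (μ : Fin r → ℝ),
      Module.finrank ℂ (LinearMap.range (A : E →ₗ[ℂ] E)) = r ∧
      Orthonormal ℂ e ∧ Antitone μ ∧ (∀ i, 0 ≤ μ i) ∧
      (∀ i, A (e i) = (μ i : ℂ) • e i) ∧
      (∀ x : E, A x = ∑ i, ((μ i : ℂ) * ⟪e i, x⟫_ℂ) • e i) := by
  haveI hK : FiniteDimensional ℂ (LinearMap.range (A : E →ₗ[ℂ] E)) := hfr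
  set K := LinearMap.range (A : E →ₗ[ℂ] E) with hKdef
  have hmaps : ∀ x ∈ K, (A : E →ₗ[ℂ] E) x ∈ K := fun x _ => LinearMap.mem_range_self _ x
  set T : K →ₗ[ℂ] K := (A : E →ₗ[ℂ] E).restrict hmaps with hTdef
  have hsa : IsSelfAdjoint A := hpos.isSelfAdjoint
  have hsymA : (A : E →ₗ[ℂ] E).IsSymmetric := hsa.isSymmetric
  have hsym : T.IsSymmetric := by
    intro x y
    rw [Submodule.coe_inner, Submodule.coe_inner]
    exact hsymA (x : E) (y : E)
  set r := Module.finrank ℂ K with hr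
  set b := hsym.eigenvectorBasis hr.symm with hb
  set μ0 := hsym.eigenvalues hr.symm with hμ0
  set σ := Tuple.sort (fun i => -μ0 i) with hσ
  have heigK : ∀ j, A ((b j : K) : E) = (μ0 j : ℂ) • ((b j : K) : E) := by
    intro j
    have h0 := hsym.apply_eigenvectorBasis hr.symm j
    have h1 : ((T (b j) : K) : E) = A ((b j : K) : E) := rfl
    rw [h0] at h1
    rw [← h1]
    simp
    rfl
  have honK : Orthonormal ℂ (fun i => ((b (σ i) : K) : E)) := by
    have h1 : Orthonormal ℂ (⇑b ∘ ⇑σ) := b.orthonormal.comp _ σ.injective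
    exact h1.comp_linearIsometry K.subtypeₗᵢ
  have hanti : Antitone (fun i => μ0 (σ i)) := by
    intro i j hij
    have := Tuple.monotone_sort (fun i => -μ0 i) hij
    simpa using this
  have hnn : ∀ i, 0 ≤ μ0 (σ i) := by
    intro i
    have h0 := hpos.2 ((b (σ i) : K) : E)
    rw [ContinuousLinearMap.reApplyInnerSelf] at h0
    have hnrm : ‖((b (σ i) : K) : E)‖ = 1 := by
      simpa using honK.1 i
    rw [heigK (σ i), inner_smul_left] at h0
    rw [inner_self_eq_norm_sq_to_K, hnrm] at h0
    simpa using h0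
  refine ⟨r, fun i => ((b (σ i) : K) : E), fun i => μ0 (σ i), hr.symm, honK, hanti, hnn,
    fun i => heigK (σ i), ?_⟩
  intro x
  have hxsub : x - ↑(Submodule.orthogonalProjection K x) ∈ Kᗮ := Submodule.sub_starProjection_mem_orthogonal x
  have hAperp : ∀ y ∈ Kᗮ, A y = 0 := by
    intro y hy
    have h1 : (⟪A y, A y⟫_ℂ) = 0 := by
      have h2 : (⟪A y, A y⟫_ℂ) = ⟪y, A (A y)⟫_ℂ := hsymA y (A y)
      rw [h2, ← inner_conj_symm]
      rw [(Submodule.mem_orthogonal K y).mp hy (A (A y)) (LinearMap.mem_range_self _ _)]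
      simp
    exact inner_self_eq_zero.mp h1
  have hAx : A x = A ↑(Submodule.orthogonalProjection K x) := by
    conv_lhs => rw [show x = ↑(Submodule.orthogonalProjection K x) + (x - ↑(Submodule.orthogonalProjection K x)) by
      abel]
    rw [map_add, hAperp _ hxsub, add_zero]
  have hrepr : ∀ j, b.repr (Submodule.orthogonalProjection K x) j = ⟪((b j : K) : E), x⟫_ℂ := by
    intro j
    rw [b.repr_apply_apply, Submodule.coe_inner]
    have h3 : (⟪((b j : K) : E), x - ↑(Submodule.orthogonalProjection K x)⟫_ℂ) = 0 :=
      (Submodule.mem_orthogonal K _).mp hxsub _ (b j).2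
    rw [inner_sub_right] at h3
    linear_combination -h3
  have hPexp : (↑(Submodule.orthogonalProjection K x) : E) = ∑ j, (⟪((b j : K) : E), x⟫_ℂ) • ((b j : K) : E) := by
    have h1 := b.sum_repr (Submodule.orthogonalProjection K x)
    have h2 := congrArg (Subtype.val : K → E) h1
    rw [← h2]
    push_cast
    refine Finset.sum_congr rfl fun j _ => ?_
    rw [hrepr j]
  have hAexp : A x = ∑ j, ((μ0 j : ℂ) * ⟪((b j : K) : E), x⟫_ℂ) • ((b j : K) : E) := by
    rw [hAx]
    rw [hPexp, map_sum]
    refine Finset.sum_congr rfl fun j _ => ?_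
    rw [ContinuousLinearMap.map_smul, heigK j, smul_smul, mul_comm]
  rw [hAexp]
  exact (Equiv.sum_comp σ (fun j => ((μ0 j : ℂ) * ⟪((b j : K) : E), x⟫_ℂ) • ((b j : K) : E))).symm


lemma orthonormal_norm_sq_sum {ι : Type*} {v : ι → E} (hv : Orthonormal ℂ v)
    (s : Finset ι) (l : ι → ℂ) :
    ‖∑ i ∈ s, l i • v i‖ ^ 2 = ∑ i ∈ s, ‖l i‖ ^ 2 := by
  have h2 : RCLike.re (⟪∑ i ∈ s, l i • v i, ∑ i ∈ s, l i • v i⟫_ℂ) = ‖∑ i ∈ s, l i • v i‖ ^ 2 :=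
    inner_self_eq_norm_sq _
  rw [← h2, hv.inner_sum l l s]
  rw [map_sum]
  refine Finset.sum_congr rfl fun i _ => ?_
  rw [RCLike.conj_mul]
  norm_cast

set_option maxHeartbeats 1000000 in
lemma key_ineq {ι : Type*} [Fintype ι] [DecidableEq ι] (hcard : 3 ≤ Fintype.card ι)
    (T : ι → E →L[ℂ] E)
    (horth : ∀ p q, ContinuousLinearMap.adjoint (T p) * T q = if p = q then 1 else 0)
    (A : E →L[ℂ] E) (hfr : IsFiniteRank A) (hpos : A.IsPositive) (m : ℕ) :
    sVal A m ≤ sVal A (2 * m + 1) +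
      sVal (∑ p, (T p * A - A * T p) * ContinuousLinearMap.adjoint (T p)) m := by
  classical
  obtain ⟨r, e, μ, hrank, hon, hanti, hnn, heig, hexp⟩ := exists_eigen A hfr hpos
  set R := ∑ p, (T p * A - A * T p) * ContinuousLinearMap.adjoint (T p) with hRdef
  by_cases hm : m < r
  swap
  · have h0 : sVal A m ≤ 0 := by
      have h1 := sVal_le (T := A) (F := A) (j := m) ⟨hfr, by rw [hrank]; omega⟩
      simpa using h1
    have h2 := add_nonneg (sVal_nonneg A (2 * m + 1)) (sVal_nonneg R m)
    linarith
  set c := μ ⟨m, hm⟩ with hc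
  have hc0 : 0 ≤ c := hnn _
  -- inner products of T's
  have hTinner : ∀ p p' (x y : E), ⟪T p x, T p' y⟫_ℂ = if p = p' then ⟪x, y⟫_ℂ else 0 := by
    intro p p' x y
    have h1 : ⟪T p x, T p' y⟫_ℂ = ⟪(ContinuousLinearMap.adjoint (T p') * T p) x, y⟫_ℂ := by
      rw [ContinuousLinearMap.mul_apply]
      exact (ContinuousLinearMap.adjoint_inner_left (T p') y (T p x)).symm
    rw [h1, horth]
    by_cases h : p' = p
    · subst h; simp
    · rw [if_neg h, if_neg (fun hh : p = p' => h hh.symm)]; simp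
  -- Step 1 : sVal A m ≤ c
  have step1 : sVal A m ≤ c := by
    set F : E →L[ℂ] E :=
      ∑ i ∈ Finset.univ.filter (fun i : Fin r => (i : ℕ) < m),
        (μ i : ℂ) • ((innerSL ℂ (e i)).smulRight (e i)) with hFdef
    have hFapp : ∀ x, F x = ∑ i ∈ Finset.univ.filter (fun i : Fin r => (i : ℕ) < m),
        ((μ i : ℂ) * ⟪e i, x⟫_ℂ) • e i := by
      intro x
      rw [hFdef, ContinuousLinearMap.sum_apply]
      refine Finset.sum_congr rfl fun i _ => ?_
      rw [ContinuousLinearMap.smul_apply, ContinuousLinearMap.smulRight_apply, innerSL_apply_apply,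
        smul_smul]
    have hrankF : RankLe F m := by
      set sub : Type _ := {i : Fin r // (i : ℕ) < m} with hsub
      have hle : LinearMap.range (F : E →ₗ[ℂ] E) ≤
          Submodule.span ℂ (Set.range fun i : sub => e i.1) := by
        rintro x ⟨y, rfl⟩
        have h1 : (F : E →ₗ[ℂ] E) y = F y := rfl
        rw [h1, hFapp]
        refine Submodule.sum_mem _ fun i hi => Submodule.smul_mem _ _ ?_
        exact Submodule.subset_span ⟨⟨i, by simpa using hi⟩, rfl⟩
      haveI : FiniteDimensional ℂ (Submodule.span ℂ (Set.range fun i : sub => e i.1)) :=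
        FiniteDimensional.span_of_finite ℂ (Set.finite_range _)
      refine ⟨Submodule.finiteDimensional_of_le hle, ?_⟩
      refine (Submodule.finrank_mono hle).trans ?_
      refine (finrank_range_le_card _).trans ?_
      refine le_trans (Fintype.card_le_of_injective (fun i : sub => (⟨i.1, i.2⟩ : Fin m)) ?_)
        (by simp)
      intro i j hij
      apply Subtype.ext
      apply Fin.ext
      simpa [Fin.ext_iff] using hij
    have hnormF : ‖A - F‖ ≤ c := by
      refine ContinuousLinearMap.opNorm_le_bound _ hc0 fun x => ?_
      have hsub : (A - F) x = ∑ i ∈ Finset.univ.filter (fun i : Fin r => ¬ (i : ℕ) < m),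
          ((μ i : ℂ) * ⟪e i, x⟫_ℂ) • e i := by
        rw [ContinuousLinearMap.sub_apply, hexp x, hFapp]
        rw [← Finset.sum_filter_add_sum_filter_not Finset.univ (fun i : Fin r => (i : ℕ) < m)
          (fun i => ((μ i : ℂ) * ⟪e i, x⟫_ℂ) • e i)]
        abel
      have hsq : ‖(A - F) x‖ ^ 2 ≤ (c * ‖x‖) ^ 2 := by
        rw [hsub, orthonormal_norm_sq_sum hon]
        have hterm : ∀ i ∈ Finset.univ.filter (fun i : Fin r => ¬ (i : ℕ) < m),
            ‖(μ i : ℂ) * ⟪e i, x⟫_ℂ‖ ^ 2 ≤ c ^ 2 * ‖⟪e i, x⟫_ℂ‖ ^ 2 := by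
          intro i hi
          have him : m ≤ (i : ℕ) := by simpa using (Finset.mem_filter.mp hi).2
          have hμi : μ i ≤ c := hanti (by exact him)
          have h0i : 0 ≤ μ i := hnn i
          rw [norm_mul, mul_pow]
          have : ‖((μ i : ℝ) : ℂ)‖ ^ 2 ≤ c ^ 2 := by
            rw [Complex.norm_real]
            rw [Real.norm_eq_abs, abs_of_nonneg h0i]
            nlinarith
          exact mul_le_mul_of_nonneg_right this (by positivity)
        calc ∑ i ∈ Finset.univ.filter (fun i : Fin r => ¬ (i : ℕ) < m),
              ‖(μ i : ℂ) * ⟪e i, x⟫_ℂ‖ ^ 2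
            ≤ ∑ i ∈ Finset.univ.filter (fun i : Fin r => ¬ (i : ℕ) < m),
              c ^ 2 * ‖⟪e i, x⟫_ℂ‖ ^ 2 := Finset.sum_le_sum hterm
          _ ≤ ∑ i : Fin r, c ^ 2 * ‖⟪e i, x⟫_ℂ‖ ^ 2 := by
              refine Finset.sum_le_sum_of_subset_of_nonneg (Finset.filter_subset _ _) ?_
              intro i _ _; positivity
          _ = c ^ 2 * ∑ i : Fin r, ‖⟪e i, x⟫_ℂ‖ ^ 2 := by rw [Finset.mul_sum]
          _ ≤ c ^ 2 * ‖x‖ ^ 2 := by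
              refine mul_le_mul_of_nonneg_left ?_ (by positivity)
              exact hon.sum_inner_products_le x
          _ = (c * ‖x‖) ^ 2 := by ring
      have h0 : (0:ℝ) ≤ c * ‖x‖ := by positivity
      nlinarith [norm_nonneg ((A - F) x)]
    exact (sVal_le hrankF).trans hnormF
  -- Step 2
  set Q := ∑ p, T p * ContinuousLinearMap.adjoint (T p) with hQdef
  set B := ∑ p, T p * A * ContinuousLinearMap.adjoint (T p) with hBdef
  have hQ1 : ‖Q‖ ≤ 1 := by
    refine ContinuousLinearMap.opNorm_le_bound _ zero_le_one fun x => ?_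
    have hQx : Q x = ∑ p, T p (ContinuousLinearMap.adjoint (T p) x) := by
      rw [hQdef, ContinuousLinearMap.sum_apply]
      exact Finset.sum_congr rfl fun p _ => rfl
    have h1 : ⟪Q x, Q x⟫_ℂ = ∑ p, ⟪ContinuousLinearMap.adjoint (T p) x,
        ContinuousLinearMap.adjoint (T p) x⟫_ℂ := by
      rw [hQx, sum_inner]
      have : ∀ p, ⟪T p (ContinuousLinearMap.adjoint (T p) x),
          ∑ q, T q (ContinuousLinearMap.adjoint (T q) x)⟫_ℂ =
          ⟪ContinuousLinearMap.adjoint (T p) x, ContinuousLinearMap.adjoint (T p) x⟫_ℂ := by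
        intro p
        rw [inner_sum]
        rw [Finset.sum_congr rfl (fun q _ => hTinner p q _ _)]
        simp
      exact Finset.sum_congr rfl fun p _ => this p
    have h2 : ⟪Q x, x⟫_ℂ = ∑ p, ⟪ContinuousLinearMap.adjoint (T p) x,
        ContinuousLinearMap.adjoint (T p) x⟫_ℂ := by
      rw [hQx, sum_inner]
      refine Finset.sum_congr rfl fun p _ => ?_
      rw [← ContinuousLinearMap.adjoint_inner_right]
    have h3 : ‖Q x‖ ^ 2 ≤ ‖Q x‖ * ‖x‖ := by
      have h4 : ‖Q x‖ ^ 2 = RCLike.re (⟪Q x, Q x⟫_ℂ) := (inner_self_eq_norm_sq _).symm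
      rw [h4, h1, ← h2]
      calc RCLike.re (⟪Q x, x⟫_ℂ) ≤ ‖(⟪Q x, x⟫_ℂ)‖ := RCLike.re_le_norm _
        _ ≤ ‖Q x‖ * ‖x‖ := norm_inner_le_norm _ _
    rw [one_mul]
    by_cases hq : ‖Q x‖ = 0
    · rw [hq]; exact norm_nonneg x
    · have hqpos : 0 < ‖Q x‖ := lt_of_le_of_ne (norm_nonneg _) (Ne.symm hq)
      nlinarith
  have hdecomp : B = A * Q + R := by
    rw [hBdef, hQdef, hRdef, Finset.mul_sum, ← Finset.sum_add_distrib]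
    refine Finset.sum_congr rfl fun p _ => ?_
    noncomm_ring
  -- the subspace
  set emb : Fin (m + 1) → Fin r := Fin.castLE (by omega) with hemb
  have hembinj : Function.Injective emb := Fin.castLE_injective _
  set g : ι × Fin (m + 1) → E := fun q => T q.1 (e (emb q.2)) with hgdef
  have hgon : Orthonormal ℂ g := by
    rw [orthonormal_iff_ite]
    intro q q'
    rw [hgdef]
    simp only []
    rw [hTinner]
    by_cases h1 : q.1 = q'.1
    · rw [if_pos h1]
      have h2 := (orthonormal_iff_ite.mp hon) (emb q.2) (emb q'.2)
      rw [h2]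
      by_cases h3 : q.2 = q'.2
      · rw [if_pos (by rw [h3]), if_pos (Prod.ext h1 h3)]
      · rw [if_neg (fun hh => h3 (hembinj hh)), if_neg (fun hh => h3 (congrArg Prod.snd hh))]
    · rw [if_neg h1, if_neg (fun hh => h1 (congrArg Prod.fst hh))]
  set U := Submodule.span ℂ (Set.range g) with hUdef
  haveI : FiniteDimensional ℂ U := FiniteDimensional.span_of_finite ℂ (Set.finite_range g)
  have hdimU : Module.finrank ℂ U = Fintype.card ι * (m + 1) := by
    rw [hUdef, finrank_span_eq_card hgon.linearIndependent]
    simp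
  have hBU : ∀ u, u ∈ U → c * ‖u‖ ^ 2 ≤ RCLike.re (⟪u, B u⟫_ℂ) := by
    intro u hu
    obtain ⟨f, rfl⟩ := (Submodule.mem_span_range_iff_exists_fun ℂ).mp hu
    have hTadj_u : ∀ p, ContinuousLinearMap.adjoint (T p) (∑ q, f q • g q) =
        ∑ i : Fin (m + 1), f (p, i) • e (emb i) := by
      intro p
      rw [map_sum]
      have h1 : ∀ q : ι × Fin (m + 1), ContinuousLinearMap.adjoint (T p) (f q • g q) =
          if q.1 = p then f q • e (emb q.2) else 0 := by
        intro q
        rw [map_smul]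
        have h2 : ContinuousLinearMap.adjoint (T p) (g q) =
            (ContinuousLinearMap.adjoint (T p) * T q.1) (e (emb q.2)) := rfl
        rw [h2, horth]
        by_cases h : q.1 = p
        · rw [if_pos (by rw [h]), if_pos h]; simp
        · rw [if_neg (fun hh => h hh.symm), if_neg h]; simp
      rw [Finset.sum_congr rfl (fun q _ => h1 q)]
      rw [Fintype.sum_prod_type]
      rw [Finset.sum_eq_single_of_mem p (Finset.mem_univ p)]
      · simp
      · intro a _ ha
        simp [ha]
    have hBu : RCLike.re (⟪∑ q, f q • g q, B (∑ q, f q • g q)⟫_ℂ) =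
        ∑ p, RCLike.re (⟪(∑ i : Fin (m+1), f (p, i) • e (emb i)),
          A (∑ i : Fin (m+1), f (p, i) • e (emb i))⟫_ℂ) := by
      have h1 : B (∑ q, f q • g q) = ∑ p, T p (A (ContinuousLinearMap.adjoint (T p)
          (∑ q, f q • g q))) := by
        rw [hBdef, ContinuousLinearMap.sum_apply]
        exact Finset.sum_congr rfl fun p _ => rfl
      rw [h1, inner_sum, map_sum]
      refine Finset.sum_congr rfl fun p _ => ?_
      rw [← ContinuousLinearMap.adjoint_inner_left (T p), hTadj_u p]
    have hperp : ∀ p, c * (∑ i : Fin (m+1), ‖f (p, i)‖ ^ 2) ≤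
        RCLike.re (⟪(∑ i : Fin (m+1), f (p, i) • e (emb i)),
          A (∑ i : Fin (m+1), f (p, i) • e (emb i))⟫_ℂ) := by
      intro p
      have hA : A (∑ i : Fin (m+1), f (p, i) • e (emb i)) =
          ∑ i : Fin (m+1), ((μ (emb i) : ℂ) * f (p, i)) • e (emb i) := by
        rw [map_sum]
        refine Finset.sum_congr rfl fun i _ => ?_
        rw [ContinuousLinearMap.map_smul, heig (emb i), smul_smul, mul_comm]
      rw [hA]
      have honemb : Orthonormal ℂ (e ∘ emb) := hon.comp emb hembinj
      have h2 : (⟪(∑ i : Fin (m+1), f (p, i) • (e ∘ emb) i),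
          ∑ i : Fin (m+1), ((μ (emb i) : ℂ) * f (p, i)) • (e ∘ emb) i⟫_ℂ) =
          ∑ i : Fin (m+1), (starRingEnd ℂ) (f (p, i)) * ((μ (emb i) : ℂ) * f (p, i)) :=
        honemb.inner_sum _ _ _
      have h3 : RCLike.re (∑ i : Fin (m+1),
          (starRingEnd ℂ) (f (p, i)) * ((μ (emb i) : ℂ) * f (p, i))) =
          ∑ i : Fin (m+1), μ (emb i) * ‖f (p, i)‖ ^ 2 := by
        rw [map_sum]
        refine Finset.sum_congr rfl fun i _ => ?_
        have h4 : (starRingEnd ℂ) (f (p, i)) * ((μ (emb i) : ℂ) * f (p, i)) =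
            (μ (emb i) : ℂ) * ((starRingEnd ℂ) (f (p, i)) * f (p, i)) := by ring
        rw [h4, RCLike.conj_mul, ← RCLike.ofReal_pow]
        rw [show ((μ (emb i) : ℝ) : ℂ) = RCLike.ofReal (μ (emb i)) from rfl]
        rw [← RCLike.ofReal_mul, RCLike.ofReal_re]
      have h5 : ∀ i : Fin (m+1), c * ‖f (p, i)‖ ^ 2 ≤ μ (emb i) * ‖f (p, i)‖ ^ 2 := by
        intro i
        have h6 : c ≤ μ (emb i) := hanti (by
          show emb i ≤ (⟨m, hm⟩ : Fin r)
          rw [Fin.le_def]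
          exact Nat.lt_succ_iff.mp i.2)
        exact mul_le_mul_of_nonneg_right h6 (by positivity)
      calc c * (∑ i : Fin (m+1), ‖f (p, i)‖ ^ 2)
          = ∑ i : Fin (m+1), c * ‖f (p, i)‖ ^ 2 := Finset.mul_sum _ _ _
        _ ≤ ∑ i : Fin (m+1), μ (emb i) * ‖f (p, i)‖ ^ 2 := Finset.sum_le_sum fun i _ => h5 i
        _ = RCLike.re (⟪(∑ i : Fin (m+1), f (p, i) • e (emb i)),
            ∑ i : Fin (m+1), ((μ (emb i) : ℂ) * f (p, i)) • e (emb i)⟫_ℂ) := by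
            rw [← h3]
            exact congrArg RCLike.re h2.symm
    have hnormu : ‖∑ q, f q • g q‖ ^ 2 = ∑ q, ‖f q‖ ^ 2 :=
      orthonormal_norm_sq_sum hgon _ _
    rw [hBu, hnormu]
    calc c * ∑ q, ‖f q‖ ^ 2 = ∑ p, c * (∑ i : Fin (m+1), ‖f (p, i)‖ ^ 2) := by
          rw [Fintype.sum_prod_type, Finset.mul_sum]
      _ ≤ _ := Finset.sum_le_sum fun p _ => hperp p
  -- epsilon argument
  refine le_trans step1 ?_
  refine le_of_forall_pos_le_add fun ε hε => ?_
  obtain ⟨F₁, hF₁, hF₁n⟩ := sVal_lt (show sVal A (2*m+1) < sVal A (2*m+1) + ε/2 by linarith)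
  obtain ⟨F₂, hF₂, hF₂n⟩ := sVal_lt (show sVal R m < sVal R m + ε/2 by linarith)
  set G := F₁ * Q + F₂ with hGdef
  have hrankG : RankLe G (2*m+1 + m) := (hF₁.mul_right Q).add hF₂
  have hltG : Module.finrank ℂ (LinearMap.range (G : E →ₗ[ℂ] E)) < Module.finrank ℂ U := by
    have h1 := hrankG.2
    rw [hdimU]
    have h2 : 3 * (m+1) ≤ Fintype.card ι * (m+1) := Nat.mul_le_mul_right _ hcard
    omega
  have hckey : c ≤ ‖B - G‖ := norm_sub_lower U hrankG.1 hltG hBU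
  have hBG : B - G = (A - F₁) * Q + (R - F₂) := by
    rw [hdecomp, hGdef]
    noncomm_ring
  have hn1 : ‖B - G‖ ≤ ‖A - F₁‖ * ‖Q‖ + ‖R - F₂‖ := by
    rw [hBG]
    exact (norm_add_le _ _).trans (add_le_add_left (norm_mul_le _ _) _)
  have hn2 : ‖A - F₁‖ * ‖Q‖ ≤ ‖A - F₁‖ := by
    calc ‖A - F₁‖ * ‖Q‖ ≤ ‖A - F₁‖ * 1 := mul_le_mul_of_nonneg_left hQ1 (norm_nonneg _)
      _ = ‖A - F₁‖ := mul_one _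
  linarith


lemma macaev_bound (A R : E →L[ℂ] E) (hfr : IsFiniteRank A)
    (hkey : ∀ m, sVal A m ≤ sVal A (2 * m + 1) + sVal R m) :
    ENNReal.ofReal (sVal A 0 - sVal A 1 / 2) ≤ lorentzNorm ∞ R := by
  by_cases hpos0 : sVal A 0 - sVal A 1 / 2 ≤ 0
  · rw [ENNReal.ofReal_eq_zero.mpr hpos0]
    exact zero_le
  push_neg at hpos0
  set f : ℕ → ℝ≥0∞ := fun m => ENNReal.ofReal (sVal A m * ((m : ℝ) + 1)⁻¹) with hf
  have hSodd_le : (∑' k : ℕ, f (2 * k + 1)) ≤ lorentzNorm ∞ A := by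
    rw [lorentzNorm_top]
    exact ENNReal.tsum_comp_le_tsum_of_injective (fun a b hab => by omega) f
  have hSoddfin : (∑' k : ℕ, f (2 * k + 1)) ≠ ∞ :=
    (hSodd_le.trans_lt (lt_of_le_of_ne le_top (lorentzNorm_ne_top hfr))).ne
  have hsplit : (∑' k : ℕ, f (2 * k)) + (∑' k : ℕ, f (2 * k + 1)) = ∑' m : ℕ, f m :=
    tsum_even_add_odd ENNReal.summable ENNReal.summable
  have h1 : (∑' m : ℕ, f m) ≤
      (∑' m : ℕ, ENNReal.ofReal (sVal A (2 * m + 1) * ((m : ℝ) + 1)⁻¹)) + lorentzNorm ∞ R := by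
    rw [lorentzNorm_top, ← ENNReal.tsum_add]
    refine ENNReal.tsum_le_tsum fun m => ?_
    calc f m ≤ ENNReal.ofReal ((sVal A (2 * m + 1) + sVal R m) * ((m : ℝ) + 1)⁻¹) :=
          ENNReal.ofReal_le_ofReal (mul_le_mul_of_nonneg_right (hkey m) (by positivity))
      _ ≤ _ := by rw [add_mul]; exact ENNReal.ofReal_add_le
  have h2 : (∑' m : ℕ, ENNReal.ofReal (sVal A (2 * m + 1) * ((m : ℝ) + 1)⁻¹)) =
      2 * ∑' k : ℕ, f (2 * k + 1) := by
    rw [← ENNReal.tsum_mul_left]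
    refine tsum_congr fun m => ?_
    have hcast : ((2 * m + 1 : ℕ) : ℝ) + 1 = 2 * ((m : ℝ) + 1) := by push_cast; ring
    have harith : sVal A (2 * m + 1) * ((m : ℝ) + 1)⁻¹ =
        2 * (sVal A (2 * m + 1) * (((2 * m + 1 : ℕ) : ℝ) + 1)⁻¹) := by
      rw [hcast, mul_inv]
      have hm1 : ((m : ℝ) + 1) ≠ 0 := by positivity
      field_simp
    rw [hf]
    simp only []
    rw [harith, ENNReal.ofReal_mul (by norm_num : (0:ℝ) ≤ 2)]
    norm_num
  have h3 : ENNReal.ofReal (sVal A 0 - sVal A 1 / 2) + (∑' k : ℕ, f (2 * k + 1)) ≤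
      ∑' k : ℕ, f (2 * k) := by
    rw [tsum_eq_zero_add' (f := fun k : ℕ => f (2 * k)) ENNReal.summable,
      tsum_eq_zero_add' (f := fun k : ℕ => f (2 * k + 1)) ENNReal.summable]
    have hhead : ENNReal.ofReal (sVal A 0 - sVal A 1 / 2) + f (2 * 0 + 1) ≤ f (2 * 0) := by
      have he0 : f (2 * 0) = ENNReal.ofReal (sVal A 0) := by
        rw [hf]; norm_num
      have he1 : f (2 * 0 + 1) = ENNReal.ofReal (sVal A 1 / 2) := by
        rw [hf]; norm_num; rw [mul_one_div]
      rw [he0, he1, ← ENNReal.ofReal_add hpos0.le (by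
        have := sVal_nonneg A 1; linarith)]
      refine ENNReal.ofReal_le_ofReal ?_
      linarith
    have htail : (∑' k : ℕ, f (2 * (k + 1) + 1)) ≤ ∑' k : ℕ, f (2 * (k + 1)) := by
      refine ENNReal.tsum_le_tsum fun k => ?_
      rw [hf]
      simp only []
      refine ENNReal.ofReal_le_ofReal (mul_le_mul (sVal_antitone A (by omega)) ?_ (by positivity)
        (sVal_nonneg _ _))
      rw [inv_le_inv₀ (by positivity) (by positivity)]
      push_cast
      linarith
    calc ENNReal.ofReal (sVal A 0 - sVal A 1 / 2) +
          (f (2 * 0 + 1) + ∑' k : ℕ, f (2 * (k + 1) + 1))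
        = (ENNReal.ofReal (sVal A 0 - sVal A 1 / 2) + f (2 * 0 + 1)) +
          ∑' k : ℕ, f (2 * (k + 1) + 1) := by ring
      _ ≤ f (2 * 0) + ∑' k : ℕ, f (2 * (k + 1)) := add_le_add hhead htail
  have hfin2 : (∑' k : ℕ, f (2 * k + 1)) + (∑' k : ℕ, f (2 * k + 1)) ≠ ∞ :=
    ENNReal.add_ne_top.mpr ⟨hSoddfin, hSoddfin⟩
  have h5 : ENNReal.ofReal (sVal A 0 - sVal A 1 / 2) +
      ((∑' k : ℕ, f (2 * k + 1)) + (∑' k : ℕ, f (2 * k + 1))) ≤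
      lorentzNorm ∞ R + ((∑' k : ℕ, f (2 * k + 1)) + (∑' k : ℕ, f (2 * k + 1))) := by
    calc ENNReal.ofReal (sVal A 0 - sVal A 1 / 2) +
          ((∑' k : ℕ, f (2 * k + 1)) + (∑' k : ℕ, f (2 * k + 1)))
        = (ENNReal.ofReal (sVal A 0 - sVal A 1 / 2) + (∑' k : ℕ, f (2 * k + 1))) +
          (∑' k : ℕ, f (2 * k + 1)) := by ring
      _ ≤ (∑' k : ℕ, f (2 * k)) + (∑' k : ℕ, f (2 * k + 1)) := add_le_add_left h3 _
      _ = ∑' m : ℕ, f m := hsplit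
      _ ≤ (∑' m : ℕ, ENNReal.ofReal (sVal A (2 * m + 1) * ((m : ℝ) + 1)⁻¹)) + lorentzNorm ∞ R :=
          h1
      _ = 2 * (∑' k : ℕ, f (2 * k + 1)) + lorentzNorm ∞ R := by rw [h2]
      _ = lorentzNorm ∞ R + ((∑' k : ℕ, f (2 * k + 1)) + (∑' k : ℕ, f (2 * k + 1))) := by
          rw [two_mul]; ring
  exact (ENNReal.add_le_add_iff_right hfin2).mp h5



/-- **Isometries with orthogonal ranges.** If `n ≥ 2` and `S₁, …, Sₙ` are isometries on
`H` with pairwise orthogonal ranges (`Sᵢ* Sⱼ = δᵢⱼ 1`), then `k⁻_∞(S₁, …, Sₙ) > 0`. -/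
theorem kQ_macaev_pos_of_isometries
    {H : Type} [NormedAddCommGroup H] [InnerProductSpace ℂ H] [CompleteSpace H]
    [TopologicalSpace.SeparableSpace H] (hdim : ¬ FiniteDimensional ℂ H)
    {n : ℕ} (hn : 2 ≤ n) (S : Fin n → H →L[ℂ] H)
    (horth : ∀ i j, ContinuousLinearMap.adjoint (S i) * S j = if i = j then 1 else 0) :
    0 < kQ (lorentzNorm ∞) S := by
  classical
  have hnt : Nontrivial H := by
    by_contra hcon
    rw [not_nontrivial_iff_subsingleton] at hcon
    exact hdim (Module.Finite.of_finite)
  have hSnorm : ∀ j, ∀ x : H, ‖S j x‖ = ‖x‖ := by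
    intro j x
    have h2 := ContinuousLinearMap.adjoint_inner_left (S j) x (S j x)
    have h3 : (ContinuousLinearMap.adjoint (S j)) (S j x) =
        (ContinuousLinearMap.adjoint (S j) * S j) x := rfl
    rw [h3, horth, if_pos rfl] at h2
    have h1 : (⟪S j x, S j x⟫_ℂ) = ⟪x, x⟫_ℂ := by
      rw [← h2]; simp
    have h4 : ‖S j x‖ ^ 2 = ‖x‖ ^ 2 := by
      rw [← inner_self_eq_norm_sq (𝕜 := ℂ), ← inner_self_eq_norm_sq (𝕜 := ℂ), h1]
    nlinarith [norm_nonneg (S j x), norm_nonneg x]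
  have hS1 : ∀ j, ‖S j‖ ≤ 1 := fun j => ContinuousLinearMap.opNorm_le_bound _ zero_le_one
    (fun x => by rw [hSnorm j x, one_mul])
  set T : Fin n × Fin n → H →L[ℂ] H := fun p => S p.1 * S p.2 with hTdef
  have hTorth : ∀ p q, ContinuousLinearMap.adjoint (T p) * T q = if p = q then 1 else 0 := by
    intro p q
    have h1 : ContinuousLinearMap.adjoint (T p) * T q =
        ContinuousLinearMap.adjoint (S p.2) *
          ((ContinuousLinearMap.adjoint (S p.1) * S q.1) * S q.2) := by
      rw [hTdef]
      simp only []
      rw [← ContinuousLinearMap.star_eq_adjoint, ← ContinuousLinearMap.star_eq_adjoint,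
        ← ContinuousLinearMap.star_eq_adjoint, star_mul]
      noncomm_ring
    rw [h1, horth]
    by_cases h2 : p.1 = q.1
    · rw [if_pos h2, one_mul, horth]
      by_cases h3 : p.2 = q.2
      · rw [if_pos h3, if_pos (Prod.ext h2 h3)]
      · rw [if_neg h3, if_neg (fun hh => h3 (congrArg Prod.snd hh))]
    · rw [if_neg h2, if_neg (fun hh => h2 (congrArg Prod.fst hh))]
      simp
  have hTnorm : ∀ p, ‖T p‖ ≤ 1 := by
    intro p
    refine ContinuousLinearMap.opNorm_le_bound _ zero_le_one fun x => ?_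
    have h1 : T p x = S p.1 (S p.2 x) := rfl
    rw [h1, hSnorm, hSnorm, one_mul]
  have hTadjnorm : ∀ p, ‖ContinuousLinearMap.adjoint (T p)‖ ≤ 1 := by
    intro p
    rw [ContinuousLinearMap.adjoint.norm_map]
    exact hTnorm p
  have hcard : 3 ≤ Fintype.card (Fin n × Fin n) := by
    rw [Fintype.card_prod, Fintype.card_fin]
    nlinarith
  set Kc : ℝ≥0∞ := 2 ^ (n * n) * (4 * ((n * n : ℕ) : ℝ≥0∞)) with hKc
  have hKtop : Kc ≠ ∞ := by
    rw [hKc]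
    exact ENNReal.mul_ne_top (ENNReal.pow_ne_top ENNReal.ofNat_ne_top)
      (ENNReal.mul_ne_top (by norm_num) (ENNReal.natCast_ne_top _))
  have hδpos : 0 < ENNReal.ofReal (3/8 : ℝ) / Kc :=
    ENNReal.div_pos (by rw [Ne, ENNReal.ofReal_eq_zero]; norm_num) hKtop
  refine lt_of_lt_of_le hδpos (le_sInf ?_)
  rintro C ⟨A, ⟨hfrs, hposs, hcontr, hmono, hstrong⟩, hlim⟩
  obtain ⟨ξ, hξ0⟩ := exists_ne (0 : H)
  set ζ := ‖ξ‖⁻¹ • ξ with hζ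
  have hζ1 : ‖ζ‖ = 1 := by
    rw [hζ, norm_smul, norm_inv, norm_norm]
    field_simp [norm_ne_zero_iff.mpr hξ0]
  have hnormtend : Tendsto (fun m => ‖A m ζ‖) atTop (nhds 1) := by
    have h2 := (hstrong ζ).norm
    rwa [hζ1] at h2
  have hev : ∀ᶠ m in atTop, (3/4 : ℝ) ≤ ‖A m‖ := by
    refine (hnormtend.eventually (eventually_ge_nhds (by norm_num : (3/4 : ℝ) < 1))).mono ?_
    intro m hm
    calc (3/4 : ℝ) ≤ ‖A m ζ‖ := hm
      _ ≤ ‖A m‖ * ‖ζ‖ := (A m).le_opNorm ζ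
      _ = ‖A m‖ := by rw [hζ1, mul_one]
  have hmain : ∀ᶠ m in atTop, ENNReal.ofReal (3/8 : ℝ) ≤
      Kc * (Finset.univ.sup fun j => lorentzNorm ∞ (A m * S j - S j * A m)) := by
    refine hev.mono fun m hm => ?_
    have hkey := fun m' => key_ineq hcard T hTorth (A m) (hfrs m) (hposs m) m'
    set Rm := ∑ p : Fin n × Fin n,
      (T p * A m - A m * T p) * ContinuousLinearMap.adjoint (T p) with hRm
    have hmac := macaev_bound (A m) Rm (hfrs m) hkey
    have hs0 : (3/4 : ℝ) ≤ sVal (A m) 0 := by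
      refine le_sVal fun F hF => ?_
      have hF0 : F = 0 := by
        haveI : FiniteDimensional ℂ (LinearMap.range (F : H →ₗ[ℂ] H)) := hF.1
        have h1 : LinearMap.range (F : H →ₗ[ℂ] H) = ⊥ :=
          Submodule.finrank_eq_zero.mp (Nat.le_zero.mp hF.2)
        ext x
        have h3 : (F : H →ₗ[ℂ] H) x ∈ (⊥ : Submodule ℂ H) :=
          h1 ▸ LinearMap.mem_range_self _ x
        simpa using h3
      rw [hF0, sub_zero]
      exact hm
    have hs1 : sVal (A m) 1 ≤ sVal (A m) 0 := sVal_antitone (A m) (by omega)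
    have hs38 : (3/8 : ℝ) ≤ sVal (A m) 0 - sVal (A m) 1 / 2 := by linarith
    set ε : ℝ≥0∞ := Finset.univ.sup fun j => lorentzNorm ∞ (A m * S j - S j * A m) with hε
    have hterm : ∀ p : Fin n × Fin n,
        lorentzNorm ∞ ((T p * A m - A m * T p) * ContinuousLinearMap.adjoint (T p)) ≤
          2 * (ε + ε) := by
      intro p
      have hdec : (T p * A m - A m * T p) * ContinuousLinearMap.adjoint (T p) =
          (-(S p.1 * (A m * S p.2 - S p.2 * A m) * ContinuousLinearMap.adjoint (T p))) +
          (-((A m * S p.1 - S p.1 * A m) * (S p.2 * ContinuousLinearMap.adjoint (T p)))) := by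
        rw [hTdef]
        simp only []
        noncomm_ring
      have hb1 : lorentzNorm ∞ (S p.1 * (A m * S p.2 - S p.2 * A m) *
          ContinuousLinearMap.adjoint (T p)) ≤ ε := by
        refine le_trans (lorentzNorm_mul_le _ _ _ (hS1 p.1) (hTadjnorm p)) ?_
        exact Finset.le_sup (f := fun j => lorentzNorm ∞ (A m * S j - S j * A m))
          (Finset.mem_univ p.2)
      have hb2 : lorentzNorm ∞ ((A m * S p.1 - S p.1 * A m) *
          (S p.2 * ContinuousLinearMap.adjoint (T p))) ≤ ε := by
        have h1 : (A m * S p.1 - S p.1 * A m) * (S p.2 * ContinuousLinearMap.adjoint (T p)) =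
            1 * (A m * S p.1 - S p.1 * A m) * (S p.2 * ContinuousLinearMap.adjoint (T p)) := by
          rw [one_mul]
        rw [h1]
        refine le_trans (lorentzNorm_mul_le _ _ _ ContinuousLinearMap.norm_id_le ?_) ?_
        · calc ‖S p.2 * ContinuousLinearMap.adjoint (T p)‖ ≤
              ‖S p.2‖ * ‖ContinuousLinearMap.adjoint (T p)‖ := norm_mul_le _ _
            _ ≤ 1 := mul_le_one₀ (hS1 p.2) (norm_nonneg _) (hTadjnorm p)
        · exact Finset.le_sup (f := fun j => lorentzNorm ∞ (A m * S j - S j * A m))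
            (Finset.mem_univ p.1)
      calc lorentzNorm ∞ ((T p * A m - A m * T p) * ContinuousLinearMap.adjoint (T p))
          = lorentzNorm ∞ ((-(S p.1 * (A m * S p.2 - S p.2 * A m) *
              ContinuousLinearMap.adjoint (T p))) +
            (-((A m * S p.1 - S p.1 * A m) *
              (S p.2 * ContinuousLinearMap.adjoint (T p))))) := by rw [← hdec]
        _ ≤ 2 * (lorentzNorm ∞ (-(S p.1 * (A m * S p.2 - S p.2 * A m) *
              ContinuousLinearMap.adjoint (T p))) +
            lorentzNorm ∞ (-((A m * S p.1 - S p.1 * A m) *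
              (S p.2 * ContinuousLinearMap.adjoint (T p))))) := lorentzNorm_add_le _ _
        _ = 2 * (lorentzNorm ∞ (S p.1 * (A m * S p.2 - S p.2 * A m) *
              ContinuousLinearMap.adjoint (T p)) +
            lorentzNorm ∞ ((A m * S p.1 - S p.1 * A m) *
              (S p.2 * ContinuousLinearMap.adjoint (T p)))) := by
            rw [lorentzNorm_neg, lorentzNorm_neg]
        _ ≤ 2 * (ε + ε) := mul_le_mul_right (add_le_add hb1 hb2) 2
    have hRbound : lorentzNorm ∞ Rm ≤ Kc * ε := by
      calc lorentzNorm ∞ Rm ≤ 2 ^ (Finset.univ : Finset (Fin n × Fin n)).card *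
            ∑ p : Fin n × Fin n, lorentzNorm ∞
              ((T p * A m - A m * T p) * ContinuousLinearMap.adjoint (T p)) :=
            lorentzNorm_sum_le _ _
        _ ≤ 2 ^ (n * n) * ∑ p : Fin n × Fin n, 2 * (ε + ε) := by
            rw [Finset.card_univ, Fintype.card_prod, Fintype.card_fin]
            exact mul_le_mul_right (Finset.sum_le_sum fun p _ => hterm p) _
        _ = Kc * ε := by
            rw [Finset.sum_const, Finset.card_univ, Fintype.card_prod, Fintype.card_fin,
              nsmul_eq_mul, hKc]
            push_cast
            ring
    calc ENNReal.ofReal (3/8 : ℝ) ≤ ENNReal.ofReal (sVal (A m) 0 - sVal (A m) 1 / 2) :=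
          ENNReal.ofReal_le_ofReal hs38
      _ ≤ lorentzNorm ∞ Rm := hmac
      _ ≤ Kc * ε := hRbound
  have hlim2 : Tendsto (fun m => Kc *
      (Finset.univ.sup fun j => lorentzNorm ∞ (A m * S j - S j * A m))) atTop
      (nhds (Kc * C)) := ENNReal.Tendsto.const_mul hlim (Or.inr hKtop)
  have hKC : ENNReal.ofReal (3/8 : ℝ) ≤ Kc * C := ge_of_tendsto hlim2 hmain
  exact ENNReal.div_le_of_le_mul' hKC

end
end
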